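/- arXiv:1003.4475 — 7 statements merged into one kernel-verified Lean document; each statement's English description precedes it below -/
import Mathlib

section
/- Let n ≥ 1 and let c : [0,∞) → ℝⁿ be differentiable and satisfy c'(t) = A(t)·c(t) + b(t) for all t ≥ 0, where A : [0,∞) → (n×n real matrices) and b : [0,∞) → ℝⁿ are continuous, every off-diagonal entry of A(t) is nonnegative (A(t) is a Metzler matrix) for all t, and b(t) has all entries nonnegative for all t. If every entry of c(0) is nonnegative, then every entry of c(t) is nonnegative for all t ≥ 0. -/
/-! The squared negative part `V = ∑ i, (c i)⁻ ^ 2` of the trajectory is a `C¹` Lyapunov function.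
Off the diagonal a Metzler matrix can only push a negative coordinate upwards, and `b ≥ 0` does
the same, so `V' ≤ 2 K V` where `K` bounds the entries of `A` on the time interval; since
`V` vanishes at time `0`, Grönwall's inequality keeps it at `0`. -/

open Set Matrix

theorem negPart_mul_self_eq (x : ℝ) : x⁻ * x = -(x⁻ * x⁻) := by
  rcases le_total 0 x with hx | hx
  · simp [negPart_of_nonneg hx]
  · rw [negPart_of_nonpos hx]; ring

theorem hasDerivAt_negPart_sq (x : ℝ) : HasDerivAt (fun y : ℝ => y⁻ ^ 2) (-2 * x⁻) x := by
  have hsq : ∀ z : ℝ, HasDerivAt (fun y : ℝ => y ^ 2) (2 * z) z := fun z => by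
    simpa using hasDerivAt_pow 2 z
  have eq_sq : EqOn (fun y : ℝ => y⁻ ^ 2) (· ^ 2) (Iic 0) := fun y hy => by
    simp [negPart_of_nonpos (show y ≤ 0 from hy)]
  have eq_zero : EqOn (fun y : ℝ => y⁻ ^ 2) 0 (Ici 0) := fun y hy => by
    simp [negPart_of_nonneg (show 0 ≤ y from hy)]
  rcases lt_trichotomy x 0 with hx | rfl | hx
  · rw [negPart_of_nonpos hx.le, neg_mul_neg]
    exact (hsq x).congr_of_eventuallyEq (eq_sq.eventuallyEq_of_mem (Iic_mem_nhds hx))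
  · have hleft := (hsq 0).hasDerivWithinAt.congr eq_sq (eq_sq self_mem_Iic)
    have hright := (hasDerivAt_const (0 : ℝ) (0 : ℝ)).hasDerivWithinAt.congr eq_zero
      (eq_zero self_mem_Ici)
    rw [mul_zero] at hleft
    rw [negPart_zero, mul_zero, ← hasDerivWithinAt_univ, ← Iic_union_Ici]
    exact hleft.union hright
  · rw [negPart_of_nonneg hx.le, mul_zero]
    exact (hasDerivAt_const x 0).congr_of_eventuallyEq
      (eq_zero.eventuallyEq_of_mem (Ici_mem_nhds hx))

namespace Matrix

variable {ι : Type*}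

def IsMetzler (M : Matrix ι ι ℝ) : Prop :=
  ∀ i j, i ≠ j → 0 ≤ M i j

variable [Fintype ι]

theorem IsMetzler.neg_negPart_dotProduct_mulVec_le {M : Matrix ι ι ℝ} (hM : M.IsMetzler)
    (x : ι → ℝ) : -(x⁻ ⬝ᵥ (M *ᵥ x)) ≤ x⁻ ⬝ᵥ (M *ᵥ x⁻) := by
  simp only [dotProduct, mulVec, ← Finset.sum_neg_distrib, Finset.mul_sum, Pi.negPart_apply]
  refine Finset.sum_le_sum fun i _ => Finset.sum_le_sum fun j _ => ?_
  rcases eq_or_ne i j with rfl | hij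
  · exact le_of_eq (by linear_combination -M i i * negPart_mul_self_eq (x i))
  · nlinarith [mul_nonneg (hM i j hij) (negPart_nonneg (x i)), neg_le_negPart (x j)]

theorem dotProduct_mulVec_self_le (M : Matrix ι ι ℝ) (v : ι → ℝ) :
    v ⬝ᵥ (M *ᵥ v) ≤ (∑ i, ∑ j, |M i j|) * ∑ i, v i ^ 2 := by
  have hsq : ∀ k, v k ^ 2 ≤ ∑ i, v i ^ 2 := fun k =>
    Finset.single_le_sum (fun i _ => sq_nonneg (v i)) (Finset.mem_univ k)
  simp only [dotProduct, mulVec, Finset.sum_mul]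
  refine Finset.sum_le_sum fun i _ => ?_
  rw [Finset.mul_sum]
  refine Finset.sum_le_sum fun j _ => ?_
  have hvv : |v i * v j| ≤ ∑ k, v k ^ 2 := by
    rw [abs_mul]
    nlinarith [two_mul_le_add_sq |v i| |v j|, sq_abs (v i), sq_abs (v j), hsq i, hsq j]
  calc v i * (M i j * v j) ≤ |M i j| * |v i * v j| := by
        rw [← abs_mul, mul_left_comm]; exact le_abs_self _
    _ ≤ |M i j| * ∑ k, v k ^ 2 := mul_le_mul_of_nonneg_left hvv (abs_nonneg _)

end Matrix

theorem nonneg_of_hasDerivAt_metzler_mulVec_add {ι : Type*} [Fintype ι]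
    {A : ℝ → Matrix ι ι ℝ} {b c : ℝ → ι → ℝ} {a T K : ℝ}
    (hA : ∀ t ∈ Icc a T, (A t).IsMetzler) (hAK : ∀ t ∈ Icc a T, ∑ i, ∑ j, |A t i j| ≤ K)
    (hb : ∀ t ∈ Icc a T, 0 ≤ b t) (hc : ∀ t ∈ Icc a T, HasDerivAt c (A t *ᵥ c t + b t) t)
    (ha : 0 ≤ c a) : ∀ t ∈ Icc a T, 0 ≤ c t := by
  set V : ℝ → ℝ := fun t => ∑ i, (c t i)⁻ ^ 2 with hVdef
  have hV : ∀ t ∈ Icc a T, HasDerivAt V (-2 * ((c t)⁻ ⬝ᵥ (A t *ᵥ c t + b t))) t := by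
    intro t ht
    refine (HasDerivAt.fun_sum fun i _ =>
      (hasDerivAt_negPart_sq (c t i)).comp t (hasDerivAt_pi.1 (hc t ht) i)).congr_deriv ?_
    rw [dotProduct, Finset.mul_sum]
    exact Finset.sum_congr rfl fun i _ => by rw [Pi.negPart_apply]; ring
  have hV_le : ∀ t ∈ Icc a T, -2 * ((c t)⁻ ⬝ᵥ (A t *ᵥ c t + b t)) ≤ 2 * K * V t + 0 := by
    intro t ht
    have hbc : 0 ≤ (c t)⁻ ⬝ᵥ b t := dotProduct_nonneg_of_nonneg (negPart_nonneg _) (hb t ht)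
    have hAc := (hA t ht).neg_negPart_dotProduct_mulVec_le (c t)
    have hAV : (c t)⁻ ⬝ᵥ (A t *ᵥ (c t)⁻) ≤ K * V t :=
      (dotProduct_mulVec_self_le (A t) (c t)⁻).trans <|
        mul_le_mul_of_nonneg_right (hAK t ht) (Finset.sum_nonneg fun i _ => sq_nonneg _)
    rw [dotProduct_add]
    linarith
  have hV_nonpos : ∀ t ∈ Icc a T, V t ≤ 0 := by
    have hVa : V a ≤ 0 := by simp [hVdef, negPart_of_nonneg (ha _)]
    simpa only [gronwallBound_ε0_δ0] using le_gronwallBound_of_liminf_deriv_right_le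
      (fun t ht => (hV t ht).continuousAt.continuousWithinAt)
      (fun t ht _ hr => (hV t (Ico_subset_Icc_self ht)).hasDerivWithinAt.liminf_right_slope_le hr)
      hVa fun t ht => hV_le t (Ico_subset_Icc_self ht)
  intro t ht i
  have hle : (c t i)⁻ ^ 2 ≤ V t :=
    Finset.single_le_sum (fun j _ => sq_nonneg (c t j)⁻) (Finset.mem_univ i)
  have hzero : (c t i)⁻ = 0 := pow_eq_zero_iff two_ne_zero |>.1 <|
    le_antisymm (hle.trans (hV_nonpos t ht)) (sq_nonneg _)
  exact negPart_eq_zero.1 hzero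

theorem metzler_nonneg_invariance_general {n : ℕ}
    (A : ℝ → Matrix (Fin n) (Fin n) ℝ) (b : ℝ → (Fin n → ℝ)) (c : ℝ → (Fin n → ℝ))
    (hA : ContinuousOn A (Ici 0))
    (hode : ∀ t ∈ Ici (0 : ℝ), HasDerivAt c (A t *ᵥ c t + b t) t)
    (hMetzler : ∀ t ∈ Ici (0 : ℝ), ∀ i j, i ≠ j → 0 ≤ A t i j)
    (hbnn : ∀ t ∈ Ici (0 : ℝ), ∀ i, 0 ≤ b t i)
    (h0 : ∀ i, 0 ≤ c 0 i) :
    ∀ t ∈ Ici (0 : ℝ), ∀ i, 0 ≤ c t i := by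
  intro t ht
  have hcont : ContinuousOn (fun s => ∑ i, ∑ j, |A s i j|) (Icc 0 t) := by
    have hA' : ContinuousOn A (Icc 0 t) := hA.mono Icc_subset_Ici_self
    fun_prop
  obtain ⟨K, hK⟩ := isCompact_Icc.bddAbove_image hcont
  exact nonneg_of_hasDerivAt_metzler_mulVec_add
    (fun s hs => hMetzler s hs.1) (fun s hs => hK (mem_image_of_mem _ hs))
    (fun s hs => hbnn s hs.1) (fun s hs => hode s hs.1) h0 t ⟨ht, le_rfl⟩

/-- Nonnegativity of trajectories of a linear inhomogeneous ODE system
`c' = A(t) c + b(t)` with continuous time-dependent Metzler matrix `A(t)` and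
nonnegative inhomogeneity `b(t)`. -/
theorem metzler_nonneg_invariance {n : ℕ} (hn : 1 ≤ n)
    (A : ℝ → Matrix (Fin n) (Fin n) ℝ) (b : ℝ → (Fin n → ℝ)) (c : ℝ → (Fin n → ℝ))
    (hA : ContinuousOn A (Ici 0)) (hb : ContinuousOn b (Ici 0))
    (hode : ∀ t ∈ Ici (0 : ℝ), HasDerivAt c (A t *ᵥ c t + b t) t)
    (hMetzler : ∀ t ∈ Ici (0 : ℝ), ∀ i j, i ≠ j → 0 ≤ A t i j)
    (hbnn : ∀ t ∈ Ici (0 : ℝ), ∀ i, 0 ≤ b t i)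
    (h0 : ∀ i, 0 ≤ c 0 i) :
    ∀ t ∈ Ici (0 : ℝ), ∀ i, 0 ≤ c t i :=
  metzler_nonneg_invariance_general A b c hA hode hMetzler hbnn h0
end

section
/- Consider the four-compartment acetone model with continuous, nonnegative, bounded time-varying inputs V̇_A(t), Q̇_c(t), D(t), C_I(t), with inf_{t≥0} V̇_A(t) > 0, inf_{t≥0} Q̇_c(t) > 0 and k_met > 0. Then every solution c : [0,∞) → ℝ⁴ of the model with componentwise nonnegative initial condition c(0) remains componentwise nonnegative and bounded on [0,∞). -/
open Set Filter Topology

section AcetoneAux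

/-- Generic quasipositivity ⇒ forward invariance of the nonnegative orthant. -/
lemma acetone_aux_nonneg (c : ℝ → Fin 4 → ℝ) (F : ℝ → Fin 4 → ℝ) (K : ℝ) (hK : 0 < K)
    (hode : ∀ t ∈ Ici (0:ℝ), HasDerivAt c (F t) t)
    (h0 : ∀ i, 0 ≤ c 0 i)
    (hquasi : ∀ t ∈ Ici (0:ℝ), ∀ δ, 0 < δ → ∀ i, c t i ≤ -δ → (∀ j, -δ ≤ c t j) →
      -(K * δ) ≤ F t i) :
    ∀ t ∈ Ici (0:ℝ), ∀ i, 0 ≤ c t i := by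
  set L := K + 1 with hLdef
  have hL : 0 < L := by linarith
  have hcont : ∀ j : Fin 4, ∀ t ∈ Ici (0:ℝ), ContinuousAt (fun s => c s j) t := by
    intro j t ht
    exact (continuous_apply j).continuousAt.comp (hode t ht).continuousAt
  have key : ∀ ε, 0 < ε → ∀ t ∈ Ici (0:ℝ), ∀ i, 0 < c t i + ε * Real.exp (L * t) := by
    intro ε hε
    by_contra hcon
    push_neg at hcon
    obtain ⟨T, hT, i0, hi0⟩ := hcon
    set d : Fin 4 → ℝ → ℝ := fun j s => c s j + ε * Real.exp (L * s) with hd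
    have hdcont : ∀ j : Fin 4, ∀ t ∈ Ici (0:ℝ), ContinuousAt (d j) t := by
      intro j t ht
      exact (hcont j t ht).add
        ((Real.continuous_exp.comp (continuous_const.mul continuous_id)).continuousAt.const_mul ε)
    set g : ℝ → ℝ := fun s => min (min (d 0 s) (d 1 s)) (min (d 2 s) (d 3 s)) with hg
    have hgle : ∀ s, ∀ j : Fin 4, g s ≤ d j s := by
      intro s j
      fin_cases j
      · exact le_trans (min_le_left _ _) (min_le_left _ _)
      · exact le_trans (min_le_left _ _) (min_le_right _ _)
      · exact le_trans (min_le_right _ _) (min_le_left _ _)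
      · exact le_trans (min_le_right _ _) (min_le_right _ _)
    have hgcont : ∀ t ∈ Ici (0:ℝ), ContinuousAt g t := by
      intro t ht
      exact ((hdcont 0 t ht).min (hdcont 1 t ht)).min ((hdcont 2 t ht).min (hdcont 3 t ht))
    set B := {s : ℝ | s ∈ Icc 0 T ∧ g s ≤ 0} with hB
    have hTB : T ∈ B := ⟨⟨hT, le_rfl⟩, le_trans (hgle T i0) hi0⟩
    have hBbdd : BddBelow B := ⟨0, fun s hs => hs.1.1⟩
    have hBne : B.Nonempty := ⟨T, hTB⟩
    have hBsub : B ⊆ Icc 0 T := fun s hs => hs.1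
    have hBclosed : IsClosed B := by
      refine isClosed_of_closure_subset fun x hx => ?_
      have hxIcc : x ∈ Icc 0 T := by
        have := closure_mono hBsub hx
        rwa [isClosed_Icc.closure_eq] at this
      refine ⟨hxIcc, ?_⟩
      have hcp : ClusterPt x (𝓟 B) := mem_closure_iff_clusterPt.mp hx
      haveI : (𝓝 x ⊓ 𝓟 B).NeBot := hcp
      have htd : Tendsto g (𝓝 x ⊓ 𝓟 B) (𝓝 (g x)) := (hgcont x hxIcc.1).mono_left inf_le_left
      exact le_of_tendsto htd (eventually_inf_principal.mpr (Eventually.of_forall fun s hs => hs.2))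
    set t' := sInf B with ht'def
    have ht'B : t' ∈ B := hBclosed.csInf_mem hBne hBbdd
    have ht'0 : (0:ℝ) ≤ t' := ht'B.1.1
    have ht'pos : 0 < t' := by
      rcases ht'0.lt_or_eq with h | h
      · exact h
      · exfalso
        have hg0 : 0 < g 0 := by
          have h1 : ∀ j : Fin 4, 0 < d j 0 := by
            intro j
            have h2 : (0:ℝ) < ε * Real.exp (L * 0) := by positivity
            have h3 := h0 j
            simp only [hd]
            linarith
          exact lt_min (lt_min (h1 0) (h1 1)) (lt_min (h1 2) (h1 3))
        rw [← h] at ht'B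
        linarith [ht'B.2]
    have hbefore : ∀ s, 0 ≤ s → s < t' → ∀ j : Fin 4, 0 < d j s := by
      intro s hs0 hst j
      by_contra hj
      push_neg at hj
      have hsB : s ∈ B := ⟨⟨hs0, le_trans hst.le ht'B.1.2⟩, le_trans (hgle s j) hj⟩
      exact absurd (csInf_le hBbdd hsB) (not_le.mpr hst)
    have hge : ∀ j : Fin 4, 0 ≤ d j t' := by
      intro j
      have htend : Tendsto (d j) (𝓝[<] t') (𝓝 (d j t')) :=
        ((hdcont j t' ht'0).continuousWithinAt)
      refine ge_of_tendsto htend ?_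
      filter_upwards [Ioo_mem_nhdsLT_of_mem (⟨ht'pos, le_rfl⟩ : t' ∈ Ioc 0 t')] with s hs
      exact (hbefore s hs.1.le hs.2 j).le
    obtain ⟨i, hi⟩ : ∃ i : Fin 4, d i t' ≤ 0 := by
      have h2 := ht'B.2
      rcases min_le_iff.mp h2 with h3 | h3 <;> rcases min_le_iff.mp h3 with h4 | h4
      exacts [⟨0, h4⟩, ⟨1, h4⟩, ⟨2, h4⟩, ⟨3, h4⟩]
    set δ := ε * Real.exp (L * t') with hδdef
    have hδ : 0 < δ := by positivity
    have hci : c t' i ≤ -δ := by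
      have h5 : c t' i + δ ≤ 0 := hi
      linarith
    have hcj : ∀ j, -δ ≤ c t' j := by
      intro j
      have h6 := hge j
      simp only [hd] at h6
      linarith
    have hF := hquasi t' ht'0 δ hδ i hci hcj
    have hdi : HasDerivAt (d i) (F t' i + ε * (Real.exp (L * t') * L)) t' := by
      have h1 : HasDerivAt (fun s => c s i) (F t' i) t' := (hasDerivAt_pi.mp (hode t' ht'0)) i
      have h2 : HasDerivAt (fun s : ℝ => L * s) L t' := by
        simpa using (hasDerivAt_id t').const_mul L
      have h3 : HasDerivAt (fun s : ℝ => ε * Real.exp (L * s))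
          (ε * (Real.exp (L * t') * L)) t' := (h2.exp).const_mul ε
      exact h1.add h3
    have hpos : 0 < F t' i + ε * (Real.exp (L * t') * L) := by
      have h1 : ε * (Real.exp (L * t') * L) = L * δ := by rw [hδdef]; ring
      rw [h1]
      have h2 : -(K * δ) + L * δ = δ := by rw [hLdef]; ring
      linarith
    have hslope := hasDerivAt_iff_tendsto_slope.mp hdi
    have hslope' : Tendsto (slope (d i) t') (𝓝[<] t')
        (𝓝 (F t' i + ε * (Real.exp (L * t') * L))) :=
      hslope.mono_left (nhdsWithin_mono _ fun s hs => ne_of_lt hs)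
    have hev : ∀ᶠ s in 𝓝[<] t', 0 < slope (d i) t' s := hslope'.eventually (eventually_gt_nhds hpos)
    have hev2 : ∀ᶠ s in 𝓝[<] t', s ∈ Ioo 0 t' :=
      Ioo_mem_nhdsLT_of_mem (⟨ht'pos, le_rfl⟩ : t' ∈ Ioc 0 t')
    obtain ⟨s, hs1, hs2⟩ := (hev.and hev2).exists
    rw [slope_def_field] at hs1
    have hdis : 0 < d i s := hbefore s hs2.1.le hs2.2 i
    have hneg : s - t' < 0 := sub_neg.mpr hs2.2
    rcases div_pos_iff.mp hs1 with ⟨_, h⟩ | ⟨h, _⟩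
    · linarith
    · linarith
  intro t ht i
  by_contra hneg
  push_neg at hneg
  have hexp := Real.exp_pos (L * t)
  set ε := (-(c t i)) / (2 * Real.exp (L * t)) with hεdef
  have hε : 0 < ε := by
    apply div_pos (by linarith) (by positivity)
  have hk := key ε hε t ht i
  have heq : c t i + ε * Real.exp (L * t) = c t i / 2 := by
    rw [hεdef]; field_simp; ring
  rw [heq] at hk
  linarith

/-- One-sided linear Grönwall comparison: `y' ≤ -γ y + P` gives `y ≤ y 0 + P/γ`. -/
lemma acetone_aux_gronwall {y Y : ℝ → ℝ} {γ P : ℝ} (hγ : 0 < γ) (hP : 0 ≤ P) (hy0 : 0 ≤ y 0)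
    (hd : ∀ t ∈ Ici (0:ℝ), HasDerivAt y (Y t) t)
    (hb : ∀ t ∈ Ici (0:ℝ), Y t ≤ -γ * y t + P) :
    ∀ t ∈ Ici (0:ℝ), y t ≤ y 0 + P / γ := by
  intro t ht
  have hcont : ContinuousOn y (Icc 0 t) := fun x hx =>
    (hd x hx.1).continuousAt.continuousWithinAt
  have hslope : ∀ x ∈ Ico (0:ℝ) t, ∀ r, Y x < r →
      ∃ᶠ z in 𝓝[>] x, (z - x)⁻¹ * (y z - y x) < r := by
    intro x hx r hr
    have h1 : Tendsto (slope y x) (𝓝[>] x) (𝓝 (Y x)) :=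
      (hasDerivAt_iff_tendsto_slope.mp (hd x hx.1)).mono_left
        (nhdsWithin_mono _ fun s hs => ne_of_gt hs)
    have h2 : ∀ᶠ z in 𝓝[>] x, slope y x z < r := h1.eventually (eventually_lt_nhds hr)
    refine h2.frequently.mono fun z hz => ?_
    rwa [slope_def_field, div_eq_inv_mul] at hz
  have hbound : ∀ x ∈ Ico (0:ℝ) t, Y x ≤ -γ * y x + P := fun x hx => hb x hx.1
  have h := le_gronwallBound_of_liminf_deriv_right_le hcont hslope le_rfl hbound t
    ⟨le_rfl.trans ht, le_rfl⟩
  have hne : (-γ) ≠ 0 := by linarith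
  rw [gronwallBound_of_K_ne_0 hne] at h
  have he1 : Real.exp (-γ * (t - 0)) ≤ 1 := by
    rw [Real.exp_le_one_iff]
    nlinarith [mem_Ici.mp ht]
  have he0 : 0 < Real.exp (-γ * (t - 0)) := Real.exp_pos _
  have hPγ : 0 ≤ P / γ := div_nonneg hP hγ.le
  have hkey : P / -γ * (Real.exp (-γ * (t - 0)) - 1) = P / γ * (1 - Real.exp (-γ * (t - 0))) := by
    field_simp
    ring
  simp only [] at h
  nlinarith [h, hkey]

lemma acetone_aux_Kbound {K0 K S V : ℝ} (hV : 0 < V) (hSV : 1/V ≤ S) (hK00 : 0 ≤ K0)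
    (hK : K = 1 + K0 * S) : K0 ≤ K * V := by
  have h1 : K0 * (1/V) * V ≤ K0 * S * V :=
    mul_le_mul_of_nonneg_right (mul_le_mul_of_nonneg_left hSV hK00) hV.le
  have h2 : K0 * (1/V) * V = K0 := by field_simp
  nlinarith [h1, h2, hV]

lemma acetone_aux_coef {a d Q MQ : ℝ} (ha0 : 0 ≤ a) (ha1 : a ≤ 1) (hd0 : 0 ≤ d)
    (hd1 : d ≤ 1) (hQ0 : 0 ≤ Q) (hQM : Q ≤ MQ) : a * Q * d ≤ MQ := by
  nlinarith [mul_nonneg (sub_nonneg.mpr ha1) (mul_nonneg hQ0 hd0),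
    mul_nonneg (sub_nonneg.mpr hd1) hQ0]

lemma acetone_aux_coef2 {a b d Q MQ : ℝ} (ha0 : 0 ≤ a) (ha1 : a ≤ 1) (hb0 : 0 ≤ b)
    (hb1 : b ≤ 1) (hd0 : 0 ≤ d) (hd1 : d ≤ 1) (hQ0 : 0 ≤ Q) (hQM : Q ≤ MQ) :
    a * b * Q * d ≤ MQ := by
  have h1 : 0 ≤ a * b := mul_nonneg ha0 hb0
  have h2 : a * b ≤ 1 := by nlinarith
  calc a * b * Q * d = (a * b) * Q * d := by ring
  _ ≤ MQ := acetone_aux_coef h1 h2 hd0 hd1 hQ0 hQM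

end AcetoneAux

/-- Right-hand side of the four-compartment acetone model: the state is
`c = (C_bro, C_A, C_liv, C_tis)` (indices `0,1,2,3`), with arterial concentration
`C_a = (1-q_bro)·λ_b:air·C_A + q_bro·(λ_muc:air/λ_muc:b)·C_bro` and mixed venous
concentration `C_v̄ = q_liv·λ_b:liv·C_liv + (1-q_liv)·λ_b:tis·C_tis`. -/
noncomputable def acetoneRHS (Vbro VA Vliv Vtis lba lma lmb lbl lbt kpr kmet qbro qliv
    VdA Qc D CI : ℝ) (c : Fin 4 → ℝ) : Fin 4 → ℝ :=
  ![(VdA * (CI - c 0) + D * (c 1 - c 0) +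
      qbro * Qc * (((1 - qbro) * lba * c 1 + qbro * (lma / lmb) * c 0) - (lma / lmb) * c 0)) / Vbro,
    (D * (c 0 - c 1) +
      (1 - qbro) * Qc * ((qliv * lbl * c 2 + (1 - qliv) * lbt * c 3) - lba * c 1)) / VA,
    (kpr - kmet * lbl * c 2 +
      qliv * (1 - qbro) * Qc * (((1 - qbro) * lba * c 1 + qbro * (lma / lmb) * c 0)
        - lbl * c 2)) / Vliv,
    ((1 - qliv) * (1 - qbro) * Qc * (((1 - qbro) * lba * c 1 + qbro * (lma / lmb) * c 0)
        - lbt * c 3)) / Vtis]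

set_option maxHeartbeats 4000000 in
/-- With continuous, nonnegative, bounded time-varying inputs
`V̇_A, Q̇_c, D, C_I`, with `inf V̇_A > 0`, `inf Q̇_c > 0` and `k_met > 0`, every solution of
the four-compartment acetone model with componentwise nonnegative initial condition remains
componentwise nonnegative and bounded on `[0,∞)`. -/
theorem acetone_nonneg_bounded
    (Vbro VA Vliv Vtis lba lma lmb lbl lbt kpr kmet qbro qliv : ℝ)
    (VdA Qc D CI : ℝ → ℝ)
    (hVbro : 0 < Vbro) (hVA : 0 < VA) (hVliv : 0 < Vliv) (hVtis : 0 < Vtis)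
    (hlba : 0 < lba) (hlma : 0 < lma) (hlmb : 0 < lmb) (hlbl : 0 < lbl) (hlbt : 0 < lbt)
    (hkpr : 0 ≤ kpr) (hkmet : 0 < kmet)
    (hqbro0 : 0 ≤ qbro) (hqbro1 : qbro < 1) (hqliv0 : 0 < qliv) (hqliv1 : qliv < 1)
    (hcV : ContinuousOn VdA (Ici 0)) (hcQ : ContinuousOn Qc (Ici 0))
    (hcD : ContinuousOn D (Ici 0)) (hcI : ContinuousOn CI (Ici 0))
    (hVnn : ∀ t ∈ Ici (0 : ℝ), 0 ≤ VdA t) (hQnn : ∀ t ∈ Ici (0 : ℝ), 0 ≤ Qc t)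
    (hDnn : ∀ t ∈ Ici (0 : ℝ), 0 ≤ D t) (hInn : ∀ t ∈ Ici (0 : ℝ), 0 ≤ CI t)
    (hVbd : ∃ M, ∀ t ∈ Ici (0 : ℝ), VdA t ≤ M) (hQbd : ∃ M, ∀ t ∈ Ici (0 : ℝ), Qc t ≤ M)
    (hDbd : ∃ M, ∀ t ∈ Ici (0 : ℝ), D t ≤ M) (hIbd : ∃ M, ∀ t ∈ Ici (0 : ℝ), CI t ≤ M)
    (hVinf : ∃ ε > 0, ∀ t ∈ Ici (0 : ℝ), ε ≤ VdA t)
    (hQinf : ∃ ε > 0, ∀ t ∈ Ici (0 : ℝ), ε ≤ Qc t)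
    (c : ℝ → Fin 4 → ℝ)
    (hode : ∀ t ∈ Ici (0 : ℝ), HasDerivAt c
      (acetoneRHS Vbro VA Vliv Vtis lba lma lmb lbl lbt kpr kmet qbro qliv
        (VdA t) (Qc t) (D t) (CI t) (c t)) t)
    (h0 : ∀ i, 0 ≤ c 0 i) :
    (∀ t ∈ Ici (0 : ℝ), ∀ i, 0 ≤ c t i) ∧ ∃ M, ∀ t ∈ Ici (0 : ℝ), ∀ i, c t i ≤ M := by
  obtain ⟨MV, hMV⟩ := hVbd
  obtain ⟨MQ, hMQ⟩ := hQbd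
  obtain ⟨MD, hMD⟩ := hDbd
  obtain ⟨MI, hMI⟩ := hIbd
  obtain ⟨eV, heV, heVle⟩ := hVinf
  obtain ⟨eQ, heQ, heQle⟩ := hQinf
  have h00 : (0:ℝ) ∈ Ici (0:ℝ) := self_mem_Ici
  have hMD0 : 0 ≤ MD := le_trans (hDnn 0 h00) (hMD 0 h00)
  have hMQ0 : 0 < MQ := lt_of_lt_of_le heQ (le_trans (heQle 0 h00) (hMQ 0 h00))
  have hMV0 : 0 < MV := lt_of_lt_of_le heV (le_trans (heVle 0 h00) (hMV 0 h00))
  have hMI0 : 0 ≤ MI := le_trans (hInn 0 h00) (hMI 0 h00)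
  have hlm : 0 < lma / lmb := div_pos hlma hlmb
  have h1b : 0 < 1 - qbro := by linarith
  have h1q : 0 < 1 - qliv := by linarith
  obtain ⟨K0, hK0def⟩ : ∃ x : ℝ, x = MD + MQ * (lba + lma / lmb + lbl + lbt) := ⟨_, rfl⟩
  have hK00 : 0 ≤ K0 := by
    have h1 : 0 ≤ MQ * (lba + lma / lmb + lbl + lbt) := by
      apply mul_nonneg hMQ0.le; positivity
    rw [hK0def]; linarith
  obtain ⟨S, hSdef⟩ : ∃ x : ℝ, x = 1/Vbro + 1/VA + 1/Vliv + 1/Vtis := ⟨_, rfl⟩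
  have hSbro : 1/Vbro ≤ S := by
    have := one_div_pos.mpr hVA
    have := one_div_pos.mpr hVliv
    have := one_div_pos.mpr hVtis
    rw [hSdef]; linarith
  have hSA : 1/VA ≤ S := by
    have := one_div_pos.mpr hVbro
    have := one_div_pos.mpr hVliv
    have := one_div_pos.mpr hVtis
    rw [hSdef]; linarith
  have hSliv : 1/Vliv ≤ S := by
    have := one_div_pos.mpr hVbro
    have := one_div_pos.mpr hVA
    have := one_div_pos.mpr hVtis
    rw [hSdef]; linarith
  have hStis : 1/Vtis ≤ S := by
    have := one_div_pos.mpr hVbro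
    have := one_div_pos.mpr hVA
    have := one_div_pos.mpr hVliv
    rw [hSdef]; linarith
  obtain ⟨K, hKdef⟩ : ∃ x : ℝ, x = 1 + K0 * S := ⟨_, rfl⟩
  have hK : 0 < K := by
    have hS0 : 0 ≤ S := le_trans (one_div_pos.mpr hVbro).le hSbro
    have := mul_nonneg hK00 hS0
    rw [hKdef]; linarith
  have hKbro : K0 ≤ K * Vbro := acetone_aux_Kbound hVbro hSbro hK00 hKdef
  have hKA : K0 ≤ K * VA := acetone_aux_Kbound hVA hSA hK00 hKdef
  have hKliv : K0 ≤ K * Vliv := acetone_aux_Kbound hVliv hSliv hK00 hKdef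
  have hKtis : K0 ≤ K * Vtis := acetone_aux_Kbound hVtis hStis hK00 hKdef
  -- Part 1: nonnegativity
  have hnn : ∀ t ∈ Ici (0:ℝ), ∀ i, 0 ≤ c t i := by
    apply acetone_aux_nonneg c
      (fun t => acetoneRHS Vbro VA Vliv Vtis lba lma lmb lbl lbt kpr kmet qbro qliv
        (VdA t) (Qc t) (D t) (CI t) (c t)) K hK hode h0
    intro t ht δ hδ i hci hcj
    have hA0 := hVnn t ht
    have hAM := hMV t ht
    have hQ0 := hQnn t ht
    have hQM := hMQ t ht
    have hD0 := hDnn t ht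
    have hDM := hMD t ht
    have hI0 := hInn t ht
    have hIM := hMI t ht
    have hx0 := hcj 0
    have hx1 := hcj 1
    have hx2 := hcj 2
    have hx3 := hcj 3
    have eK0 : 0 ≤ (MQ * (lma/lmb)) * δ := mul_nonneg (mul_nonneg hMQ0.le hlm.le) hδ.le
    have eK1 : 0 ≤ (MQ * lba) * δ := mul_nonneg (mul_nonneg hMQ0.le hlba.le) hδ.le
    have eK2 : 0 ≤ (MQ * lbl) * δ := mul_nonneg (mul_nonneg hMQ0.le hlbl.le) hδ.le
    have eK3 : 0 ≤ (MQ * lbt) * δ := mul_nonneg (mul_nonneg hMQ0.le hlbt.le) hδ.le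
    have eMD : 0 ≤ MD * δ := mul_nonneg hMD0 hδ.le
    have eKd : K0 * δ = (MD + MQ * (lba + lma / lmb + lbl + lbt)) * δ := by rw [hK0def]
    fin_cases i
    · -- bronchial
      have hc0 : c t 0 ≤ -δ := hci
      simp only [acetoneRHS, Fin.zero_eta, Fin.mk_one, Fin.reduceFinMk, Fin.isValue, Matrix.cons_val_zero,
        Matrix.cons_val_one, Matrix.head_cons, Matrix.cons_val_two, Matrix.tail_cons,
        Matrix.cons_val_three]
      rw [le_div_iff₀ hVbro]
      have e1 : 0 ≤ VdA t * CI t := mul_nonneg hA0 hI0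
      have e2 : 0 ≤ VdA t * (-(c t 0)) := mul_nonneg hA0 (by linarith)
      have e3 : 0 ≤ D t * (c t 1 + δ) := mul_nonneg hD0 (by linarith)
      have e4 : 0 ≤ (MD - D t) * δ := mul_nonneg (by linarith) hδ.le
      have e5 : 0 ≤ D t * (-(c t 0)) := mul_nonneg hD0 (by linarith)
      have e6 : 0 ≤ (qbro * Qc t * (1 - qbro) * lba) * (c t 1 + δ) :=
        mul_nonneg (mul_nonneg (mul_nonneg (mul_nonneg hqbro0 hQ0) h1b.le) hlba.le)
          (by linarith)
      have e7 : qbro * Qc t * (1 - qbro) ≤ MQ :=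
        acetone_aux_coef hqbro0 hqbro1.le (by linarith) (by linarith) hQ0 hQM
      have e8 : 0 ≤ (MQ - qbro * Qc t * (1 - qbro)) * (lba * δ) :=
        mul_nonneg (by linarith) (by positivity)
      have e9 : 0 ≤ (qbro * Qc t * (lma/lmb)) * ((1 - qbro) * (-(c t 0))) :=
        mul_nonneg (mul_nonneg (mul_nonneg hqbro0 hQ0) hlm.le)
          (mul_nonneg h1b.le (by linarith))
      have e10 : 0 ≤ (K * Vbro - K0) * δ := mul_nonneg (by linarith) hδ.le
      linarith only [e1, e2, e3, e4, e5, e6, e8, e9, e10, eK0, eK2, eK3, eKd]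
    · -- alveolar
      have hc1 : c t 1 ≤ -δ := hci
      simp only [acetoneRHS, Fin.zero_eta, Fin.mk_one, Fin.reduceFinMk, Fin.isValue, Matrix.cons_val_zero,
        Matrix.cons_val_one, Matrix.head_cons, Matrix.cons_val_two, Matrix.tail_cons,
        Matrix.cons_val_three]
      rw [le_div_iff₀ hVA]
      have e1 : 0 ≤ D t * (c t 0 + δ) := mul_nonneg hD0 (by linarith)
      have e2 : 0 ≤ (MD - D t) * δ := mul_nonneg (by linarith) hδ.le
      have e3 : 0 ≤ D t * (-(c t 1)) := mul_nonneg hD0 (by linarith)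
      have e4 : 0 ≤ ((1 - qbro) * Qc t * qliv * lbl) * (c t 2 + δ) :=
        mul_nonneg (mul_nonneg (mul_nonneg (mul_nonneg h1b.le hQ0) hqliv0.le) hlbl.le)
          (by linarith)
      have e5 : (1 - qbro) * Qc t * qliv ≤ MQ :=
        acetone_aux_coef (by linarith) (by linarith) hqliv0.le hqliv1.le hQ0 hQM
      have e6 : 0 ≤ (MQ - (1 - qbro) * Qc t * qliv) * (lbl * δ) :=
        mul_nonneg (by linarith) (by positivity)
      have e7 : 0 ≤ ((1 - qbro) * Qc t * (1 - qliv) * lbt) * (c t 3 + δ) :=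
        mul_nonneg (mul_nonneg (mul_nonneg (mul_nonneg h1b.le hQ0) h1q.le) hlbt.le)
          (by linarith)
      have e8 : (1 - qbro) * Qc t * (1 - qliv) ≤ MQ :=
        acetone_aux_coef (by linarith) (by linarith) (by linarith) (by linarith) hQ0 hQM
      have e9 : 0 ≤ (MQ - (1 - qbro) * Qc t * (1 - qliv)) * (lbt * δ) :=
        mul_nonneg (by linarith) (by positivity)
      have e10 : 0 ≤ ((1 - qbro) * Qc t * lba) * (-(c t 1)) :=
        mul_nonneg (mul_nonneg (mul_nonneg h1b.le hQ0) hlba.le) (by linarith)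
      have e11 : 0 ≤ (K * VA - K0) * δ := mul_nonneg (by linarith) hδ.le
      linarith only [e1, e2, e3, e4, e6, e7, e9, e10, e11, eK0, eK1, eKd]
    · -- liver
      have hc2 : c t 2 ≤ -δ := hci
      simp only [acetoneRHS, Fin.zero_eta, Fin.mk_one, Fin.reduceFinMk, Fin.isValue, Matrix.cons_val_zero,
        Matrix.cons_val_one, Matrix.head_cons, Matrix.cons_val_two, Matrix.tail_cons,
        Matrix.cons_val_three]
      rw [le_div_iff₀ hVliv]
      have e1 : 0 ≤ kmet * lbl * (-(c t 2)) :=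
        mul_nonneg (mul_nonneg hkmet.le hlbl.le) (by linarith)
      have e2 : 0 ≤ (qliv * (1 - qbro) * Qc t * (1 - qbro) * lba) * (c t 1 + δ) :=
        mul_nonneg (mul_nonneg (mul_nonneg (mul_nonneg (mul_nonneg hqliv0.le h1b.le) hQ0)
          h1b.le) hlba.le) (by linarith)
      have e3 : qliv * (1 - qbro) * Qc t * (1 - qbro) ≤ MQ :=
        acetone_aux_coef2 hqliv0.le hqliv1.le (by linarith) (by linarith) (by linarith)
          (by linarith) hQ0 hQM
      have e4 : 0 ≤ (MQ - qliv * (1 - qbro) * Qc t * (1 - qbro)) * (lba * δ) :=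
        mul_nonneg (by linarith) (by positivity)
      have e5 : 0 ≤ (qliv * (1 - qbro) * Qc t * qbro * (lma/lmb)) * (c t 0 + δ) :=
        mul_nonneg (mul_nonneg (mul_nonneg (mul_nonneg (mul_nonneg hqliv0.le h1b.le) hQ0)
          hqbro0) hlm.le) (by linarith)
      have e6 : qliv * (1 - qbro) * Qc t * qbro ≤ MQ :=
        acetone_aux_coef2 hqliv0.le hqliv1.le (by linarith) (by linarith) hqbro0 hqbro1.le
          hQ0 hQM
      have e7 : 0 ≤ (MQ - qliv * (1 - qbro) * Qc t * qbro) * ((lma/lmb) * δ) :=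
        mul_nonneg (by linarith) (by positivity)
      have e8 : 0 ≤ (qliv * (1 - qbro) * Qc t * lbl) * (-(c t 2)) :=
        mul_nonneg (mul_nonneg (mul_nonneg (mul_nonneg hqliv0.le h1b.le) hQ0) hlbl.le)
          (by linarith)
      have e9 : 0 ≤ (K * Vliv - K0) * δ := mul_nonneg (by linarith) hδ.le
      linarith only [e1, e2, e4, e5, e7, e8, e9, eK2, eK3, eMD, hkpr, eKd]
    · -- tissue
      have hc3 : c t 3 ≤ -δ := hci
      simp only [acetoneRHS, Fin.zero_eta, Fin.mk_one, Fin.reduceFinMk, Fin.isValue, Matrix.cons_val_zero,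
        Matrix.cons_val_one, Matrix.head_cons, Matrix.cons_val_two, Matrix.tail_cons,
        Matrix.cons_val_three]
      rw [le_div_iff₀ hVtis]
      have e1 : 0 ≤ ((1 - qliv) * (1 - qbro) * Qc t * (1 - qbro) * lba) * (c t 1 + δ) :=
        mul_nonneg (mul_nonneg (mul_nonneg (mul_nonneg (mul_nonneg h1q.le h1b.le) hQ0)
          h1b.le) hlba.le) (by linarith)
      have e2 : (1 - qliv) * (1 - qbro) * Qc t * (1 - qbro) ≤ MQ :=
        acetone_aux_coef2 (by linarith) (by linarith) (by linarith) (by linarith)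
          (by linarith) (by linarith) hQ0 hQM
      have e3 : 0 ≤ (MQ - (1 - qliv) * (1 - qbro) * Qc t * (1 - qbro)) * (lba * δ) :=
        mul_nonneg (by linarith) (by positivity)
      have e4 : 0 ≤ ((1 - qliv) * (1 - qbro) * Qc t * qbro * (lma/lmb)) * (c t 0 + δ) :=
        mul_nonneg (mul_nonneg (mul_nonneg (mul_nonneg (mul_nonneg h1q.le h1b.le) hQ0)
          hqbro0) hlm.le) (by linarith)
      have e5 : (1 - qliv) * (1 - qbro) * Qc t * qbro ≤ MQ :=
        acetone_aux_coef2 (by linarith) (by linarith) (by linarith) (by linarith)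
          hqbro0 hqbro1.le hQ0 hQM
      have e6 : 0 ≤ (MQ - (1 - qliv) * (1 - qbro) * Qc t * qbro) * ((lma/lmb) * δ) :=
        mul_nonneg (by linarith) (by positivity)
      have e7 : 0 ≤ ((1 - qliv) * (1 - qbro) * Qc t * lbt) * (-(c t 3)) :=
        mul_nonneg (mul_nonneg (mul_nonneg (mul_nonneg h1q.le h1b.le) hQ0) hlbt.le)
          (by linarith)
      have e8 : 0 ≤ (K * Vtis - K0) * δ := mul_nonneg (by linarith) hδ.le
      linarith only [e1, e3, e4, e6, e7, e8, eK2, eK3, eMD, eKd]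
  refine ⟨hnn, ?_⟩
  -- Part 2: boundedness via a weighted-mass Lyapunov function
  have hden : 0 < qliv * MQ + kmet := by linarith only [mul_pos hqliv0 hMQ0, hkmet]
  obtain ⟨w2, hw2def⟩ : ∃ x : ℝ, x = (qliv * MQ + kmet/2) / (qliv * MQ + kmet) := ⟨_, rfl⟩
  have hw2pos : 0 < w2 := by
    rw [hw2def]
    apply div_pos _ hden
    linarith only [mul_pos hqliv0 hMQ0, hkmet]
  have hw2lt : w2 < 1 := by
    rw [hw2def, div_lt_one hden]
    linarith only [hkmet]
  have hkm2 : qliv * MQ * (1 - w2) - kmet * w2 = -(kmet/2) := by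
    rw [hw2def]
    field_simp
    ring
  obtain ⟨w3, hw3def⟩ : ∃ x : ℝ, x = (1 + (1 - qliv*w2)/(1-qliv))/2 := ⟨_, rfl⟩
  have hz : 1 < (1 - qliv*w2)/(1-qliv) := by
    rw [lt_div_iff₀ h1q]
    linarith only [mul_pos hqliv0 (show 0 < 1 - w2 by linarith only [hw2lt])]
  have hw3gt : 1 < w3 := by rw [hw3def]; linarith
  obtain ⟨θ, hθdef⟩ : ∃ x : ℝ, x = qliv*(1-w2)/2 := ⟨_, rfl⟩
  have hθ : 0 < θ := by
    rw [hθdef]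
    linarith only [mul_pos hqliv0 (show 0 < 1 - w2 by linarith only [hw2lt])]
  have hsum' : qliv*w2 + (1-qliv)*w3 - 1 = -θ := by
    rw [hθdef, hw3def]
    field_simp
    ring
  obtain ⟨γ1, hγ1def⟩ : ∃ x : ℝ, x = (1-qbro)^2 * lba * eQ * θ := ⟨_, rfl⟩
  have hγ1 : 0 < γ1 := by
    rw [hγ1def]; exact mul_pos (mul_pos (mul_pos (pow_pos h1b 2) hlba) heQ) hθ
  obtain ⟨γ2, hγ2def⟩ : ∃ x : ℝ, x = lbl * (kmet/2) := ⟨_, rfl⟩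
  have hγ2 : 0 < γ2 := by rw [hγ2def]; exact mul_pos hlbl (by linarith)
  obtain ⟨γ3, hγ3def⟩ : ∃ x : ℝ, x = (1-qliv)*(1-qbro)*lbt*eQ*(w3-1) := ⟨_, rfl⟩
  have hγ3 : 0 < γ3 := by
    rw [hγ3def]
    exact mul_pos (mul_pos (mul_pos (mul_pos h1q h1b) hlbt) heQ) (by linarith)
  obtain ⟨γ0, hγ0def⟩ : ∃ x : ℝ, x = min (min eV γ1) (min γ2 γ3) := ⟨_, rfl⟩
  have hγ0 : 0 < γ0 := by rw [hγ0def]; exact lt_min (lt_min heV hγ1) (lt_min hγ2 hγ3)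
  have hγ0V : γ0 ≤ eV := by rw [hγ0def]; exact le_trans (min_le_left _ _) (min_le_left _ _)
  have hγ01 : γ0 ≤ γ1 := by rw [hγ0def]; exact le_trans (min_le_left _ _) (min_le_right _ _)
  have hγ02 : γ0 ≤ γ2 := by rw [hγ0def]; exact le_trans (min_le_right _ _) (min_le_left _ _)
  have hγ03 : γ0 ≤ γ3 := by rw [hγ0def]; exact le_trans (min_le_right _ _) (min_le_right _ _)
  have hw2Vliv : 0 < w2 * Vliv := mul_pos hw2pos hVliv
  have hw3Vtis : 0 < w3 * Vtis := mul_pos (by linarith) hVtis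
  obtain ⟨Wm, hWmdef⟩ : ∃ x : ℝ, x = Vbro + VA + w2*Vliv + w3*Vtis := ⟨_, rfl⟩
  have hWm : 0 < Wm := by rw [hWmdef]; linarith
  obtain ⟨γ, hγdef⟩ : ∃ x : ℝ, x = γ0 / Wm := ⟨_, rfl⟩
  have hγ : 0 < γ := by rw [hγdef]; exact div_pos hγ0 hWm
  have hγWm : γ * Wm = γ0 := by
    rw [hγdef]
    field_simp
  obtain ⟨P, hPdef⟩ : ∃ x : ℝ, x = MV*MI + w2*kpr := ⟨_, rfl⟩
  have hP : 0 ≤ P := by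
    rw [hPdef]
    have := mul_nonneg hMV0.le hMI0
    have := mul_nonneg hw2pos.le hkpr
    linarith
  have hy0 : 0 ≤ Vbro * c 0 0 + VA * c 0 1 + (w2*Vliv) * c 0 2 + (w3*Vtis) * c 0 3 := by
    have h1 := mul_nonneg hVbro.le (h0 0)
    have h2 := mul_nonneg hVA.le (h0 1)
    have h3 := mul_nonneg hw2Vliv.le (h0 2)
    have h4 := mul_nonneg hw3Vtis.le (h0 3)
    linarith
  have hYd : ∀ s ∈ Ici (0:ℝ), HasDerivAt
      (fun u => Vbro * c u 0 + VA * c u 1 + (w2*Vliv) * c u 2 + (w3*Vtis) * c u 3)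
      (VdA s * CI s + w2 * kpr
        + (-(VdA s) + qbro*(1-qbro)*(lma/lmb)*Qc s*(qliv*w2+(1-qliv)*w3-1)) * c s 0
        + ((1-qbro)^2*lba*Qc s*(qliv*w2+(1-qliv)*w3-1)) * c s 1
        + (-(kmet*lbl*w2) + qliv*(1-qbro)*Qc s*lbl*(1-w2)) * c s 2
        + ((1-qliv)*(1-qbro)*lbt*Qc s*(1-w3)) * c s 3) s := by
    intro s hs
    have hp := hasDerivAt_pi.mp (hode s hs)
    have hsum := ((((hp 0).const_mul Vbro).add ((hp 1).const_mul VA)).add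
      ((hp 2).const_mul (w2*Vliv))).add ((hp 3).const_mul (w3*Vtis))
    have heq : Vbro * acetoneRHS Vbro VA Vliv Vtis lba lma lmb lbl lbt kpr kmet qbro qliv
          (VdA s) (Qc s) (D s) (CI s) (c s) 0
        + VA * acetoneRHS Vbro VA Vliv Vtis lba lma lmb lbl lbt kpr kmet qbro qliv
          (VdA s) (Qc s) (D s) (CI s) (c s) 1
        + w2*Vliv * acetoneRHS Vbro VA Vliv Vtis lba lma lmb lbl lbt kpr kmet qbro qliv
          (VdA s) (Qc s) (D s) (CI s) (c s) 2
        + w3*Vtis * acetoneRHS Vbro VA Vliv Vtis lba lma lmb lbl lbt kpr kmet qbro qliv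
          (VdA s) (Qc s) (D s) (CI s) (c s) 3
        = VdA s * CI s + w2 * kpr
        + (-(VdA s) + qbro*(1-qbro)*(lma/lmb)*Qc s*(qliv*w2+(1-qliv)*w3-1)) * c s 0
        + ((1-qbro)^2*lba*Qc s*(qliv*w2+(1-qliv)*w3-1)) * c s 1
        + (-(kmet*lbl*w2) + qliv*(1-qbro)*Qc s*lbl*(1-w2)) * c s 2
        + ((1-qliv)*(1-qbro)*lbt*Qc s*(1-w3)) * c s 3 := by
      simp only [acetoneRHS, Fin.isValue, Matrix.cons_val_zero, Matrix.cons_val_one,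
        Matrix.head_cons, Matrix.cons_val_two, Matrix.tail_cons, Matrix.cons_val_three]
      field_simp
      ring
    rw [heq] at hsum
    exact hsum
  have hYb : ∀ s ∈ Ici (0:ℝ),
      VdA s * CI s + w2 * kpr
        + (-(VdA s) + qbro*(1-qbro)*(lma/lmb)*Qc s*(qliv*w2+(1-qliv)*w3-1)) * c s 0
        + ((1-qbro)^2*lba*Qc s*(qliv*w2+(1-qliv)*w3-1)) * c s 1
        + (-(kmet*lbl*w2) + qliv*(1-qbro)*Qc s*lbl*(1-w2)) * c s 2
        + ((1-qliv)*(1-qbro)*lbt*Qc s*(1-w3)) * c s 3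
      ≤ -γ * (Vbro * c s 0 + VA * c s 1 + (w2*Vliv) * c s 2 + (w3*Vtis) * c s 3) + P := by
    intro s hs
    rw [hsum']
    have hA0 := hVnn s hs
    have hAe := heVle s hs
    have hAM := hMV s hs
    have hQ0 := hQnn s hs
    have hQe := heQle s hs
    have hQM := hMQ s hs
    have hI0 := hInn s hs
    have hIM := hMI s hs
    have hx0 := hnn s hs 0
    have hx1 := hnn s hs 1
    have hx2 := hnn s hs 2
    have hx3 := hnn s hs 3
    have b1 : VdA s * CI s ≤ MV * MI := mul_le_mul hAM hIM hI0 hMV0.le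
    have b2 : (-(VdA s) + qbro*(1-qbro)*(lma/lmb)*Qc s*(-θ)) * c s 0 ≤ -eV * c s 0 := by
      apply mul_le_mul_of_nonneg_right _ hx0
      have h5 : 0 ≤ qbro*(1-qbro)*(lma/lmb)*Qc s*θ :=
        mul_nonneg (mul_nonneg (mul_nonneg (mul_nonneg hqbro0 h1b.le) hlm.le) hQ0) hθ.le
      linarith only [h5, hAe]
    have b3 : ((1-qbro)^2*lba*Qc s*(-θ)) * c s 1 ≤ -γ1 * c s 1 := by
      apply mul_le_mul_of_nonneg_right _ hx1
      rw [hγ1def]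
      have h5 : 0 ≤ (1-qbro)^2*lba*(Qc s - eQ)*θ :=
        mul_nonneg (mul_nonneg (mul_nonneg (pow_nonneg h1b.le 2) hlba.le)
          (by linarith only [hQe])) hθ.le
      linarith only [h5]
    have b4 : (-(kmet*lbl*w2) + qliv*(1-qbro)*Qc s*lbl*(1-w2)) * c s 2 ≤ -γ2 * c s 2 := by
      apply mul_le_mul_of_nonneg_right _ hx2
      rw [hγ2def]
      have h5 : (1-qbro)*Qc s ≤ MQ := by
        linarith only [mul_nonneg hQ0 hqbro0, hQM]
      have h6 : (qliv*lbl*(1-w2))*((1-qbro)*Qc s) ≤ (qliv*lbl*(1-w2))*MQ :=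
        mul_le_mul_of_nonneg_left h5
          (mul_nonneg (mul_nonneg hqliv0.le hlbl.le) (by linarith only [hw2lt]))
      have h7 : lbl*(qliv * MQ * (1 - w2) - kmet * w2) = lbl*(-(kmet/2)) := by rw [hkm2]
      linarith only [h6, h7]
    have b5 : ((1-qliv)*(1-qbro)*lbt*Qc s*(1-w3)) * c s 3 ≤ -γ3 * c s 3 := by
      apply mul_le_mul_of_nonneg_right _ hx3
      rw [hγ3def]
      have h5 : 0 ≤ (1-qliv)*(1-qbro)*lbt*(w3-1)*(Qc s - eQ) :=
        mul_nonneg (mul_nonneg (mul_nonneg (mul_nonneg h1q.le h1b.le) hlbt.le)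
          (by linarith only [hw3gt])) (by linarith only [hQe])
      linarith only [h5]
    have hg0 : γ0 * c s 0 ≤ eV * c s 0 := mul_le_mul_of_nonneg_right hγ0V hx0
    have hg1 : γ0 * c s 1 ≤ γ1 * c s 1 := mul_le_mul_of_nonneg_right hγ01 hx1
    have hg2 : γ0 * c s 2 ≤ γ2 * c s 2 := mul_le_mul_of_nonneg_right hγ02 hx2
    have hg3 : γ0 * c s 3 ≤ γ3 * c s 3 := mul_le_mul_of_nonneg_right hγ03 hx3
    have hW0 : 0 ≤ (VA + w2*Vliv + w3*Vtis) * c s 0 :=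
      mul_nonneg (by linarith only [hVA, hw2Vliv, hw3Vtis]) hx0
    have hW1 : 0 ≤ (Vbro + w2*Vliv + w3*Vtis) * c s 1 :=
      mul_nonneg (by linarith only [hVbro, hw2Vliv, hw3Vtis]) hx1
    have hW2 : 0 ≤ (Vbro + VA + w3*Vtis) * c s 2 :=
      mul_nonneg (by linarith only [hVbro, hVA, hw3Vtis]) hx2
    have hW3 : 0 ≤ (Vbro + VA + w2*Vliv) * c s 3 :=
      mul_nonneg (by linarith only [hVbro, hVA, hw2Vliv]) hx3
    have hyle : Vbro * c s 0 + VA * c s 1 + (w2*Vliv) * c s 2 + (w3*Vtis) * c s 3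
        ≤ Wm * (c s 0 + c s 1 + c s 2 + c s 3) := by
      have hWme : Wm * (c s 0 + c s 1 + c s 2 + c s 3)
          = (Vbro + VA + w2*Vliv + w3*Vtis) * (c s 0 + c s 1 + c s 2 + c s 3) := by
        rw [hWmdef]
      linarith only [hW0, hW1, hW2, hW3, hWme]
    have h6 : γ * (Vbro * c s 0 + VA * c s 1 + (w2*Vliv) * c s 2 + (w3*Vtis) * c s 3)
        ≤ γ * (Wm * (c s 0 + c s 1 + c s 2 + c s 3)) := mul_le_mul_of_nonneg_left hyle hγ.le
    have h7 : γ * (Wm * (c s 0 + c s 1 + c s 2 + c s 3))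
        = γ0 * c s 0 + γ0 * c s 1 + γ0 * c s 2 + γ0 * c s 3 := by
      rw [← hγWm]; ring
    have hPe : P = MV*MI + w2*kpr := hPdef
    linarith only [b1, b2, b3, b4, b5, hg0, hg1, hg2, hg3, h6, h7, hPe]
  have hbd := acetone_aux_gronwall hγ hP hy0 hYd hYb
  obtain ⟨My, hMydef⟩ : ∃ x : ℝ, x =
    (Vbro * c 0 0 + VA * c 0 1 + (w2*Vliv) * c 0 2 + (w3*Vtis) * c 0 3) + P / γ := ⟨_, rfl⟩
  have hMy0 : 0 ≤ My := by
    rw [hMydef]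
    have := div_nonneg hP hγ.le
    linarith only [hy0, this]
  have hMyb : ∀ t ∈ Ici (0:ℝ),
      Vbro * c t 0 + VA * c t 1 + (w2*Vliv) * c t 2 + (w3*Vtis) * c t 3 ≤ My := by
    intro t ht
    rw [hMydef]
    exact hbd t ht
  refine ⟨My/Vbro + My/VA + My/(w2*Vliv) + My/(w3*Vtis), ?_⟩
  intro t ht i
  have hyt := hMyb t ht
  have hx0 := hnn t ht 0
  have hx1 := hnn t ht 1
  have hx2 := hnn t ht 2
  have hx3 := hnn t ht 3
  have hm1 := mul_nonneg hVbro.le hx0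
  have hm2 := mul_nonneg hVA.le hx1
  have hm3 := mul_nonneg hw2Vliv.le hx2
  have hm4 := mul_nonneg hw3Vtis.le hx3
  have hd1 : 0 ≤ My/Vbro := div_nonneg hMy0 hVbro.le
  have hd2 : 0 ≤ My/VA := div_nonneg hMy0 hVA.le
  have hd3 : 0 ≤ My/(w2*Vliv) := div_nonneg hMy0 hw2Vliv.le
  have hd4 : 0 ≤ My/(w3*Vtis) := div_nonneg hMy0 hw3Vtis.le
  fin_cases i
  · show c t 0 ≤ My/Vbro + My/VA + My/(w2*Vliv) + My/(w3*Vtis)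
    have h1 : c t 0 ≤ My/Vbro := by
      rw [le_div_iff₀ hVbro]
      linarith only [hyt, hm2, hm3, hm4]
    linarith only [h1, hd2, hd3, hd4]
  · show c t 1 ≤ My/Vbro + My/VA + My/(w2*Vliv) + My/(w3*Vtis)
    have h1 : c t 1 ≤ My/VA := by
      rw [le_div_iff₀ hVA]
      linarith only [hyt, hm1, hm3, hm4]
    linarith only [h1, hd1, hd3, hd4]
  · show c t 2 ≤ My/Vbro + My/VA + My/(w2*Vliv) + My/(w3*Vtis)
    have h1 : c t 2 ≤ My/(w2*Vliv) := by
      rw [le_div_iff₀ hw2Vliv]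
      linarith only [hyt, hm1, hm2, hm4]
    linarith only [h1, hd1, hd2, hd4]
  · show c t 3 ≤ My/Vbro + My/VA + My/(w2*Vliv) + My/(w3*Vtis)
    have h1 : c t 3 ≤ My/(w3*Vtis) := by
      rw [le_div_iff₀ hw3Vtis]
      linarith only [hyt, hm1, hm2, hm3]
    linarith only [h1, hd1, hd2, hd3]
end

section
/- Let c = (C_bro, C_A, C_liv, C_tis) be any differentiable solution of the four-compartment acetone model. Then the total mass m(t) := Ṽ_bro·C_bro(t) + Ṽ_A·C_A(t) + Ṽ_liv·C_liv(t) + Ṽ_tis·C_tis(t) satisfies m'(t) = k_pr − k_met·λ_b:liv·C_liv(t) + V̇_A·(C_I − C_bro(t)) for all t; equivalently, writing the model as ċ = A c + b, the row vector (Ṽ_bro, Ṽ_A, Ṽ_liv, Ṽ_tis) satisfies (Ṽ_bro, Ṽ_A, Ṽ_liv, Ṽ_tis)·A = (−V̇_A, 0, −k_met·λ_b:liv, 0). -/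
open Set Matrix

/-! Every exchange flux leaves one compartment and enters another, so in the volume-weighted sum
of the right-hand sides all exchange terms cancel, leaving only production, metabolism and
ventilation. The total mass is a linear functional `w ⬝ᵥ c` of the state, so this one identity
gives both the mass balance along solutions and, comparing coefficients of the affine map
`x ↦ A x + b`, the row identity `w A = (−V̇_A, 0, −k_met λ_b:liv, 0)`. -/

theorem HasDerivAt.const_dotProduct {n : Type*} [Fintype n] {c : ℝ → n → ℝ} {c' : n → ℝ}
    {t : ℝ} (w : n → ℝ) (hc : HasDerivAt c c' t) :
    HasDerivAt (fun s => w ⬝ᵥ c s) (w ⬝ᵥ c') t :=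
  HasDerivAt.fun_sum fun i _ => (hasDerivAt_pi.mp hc i).const_mul (w i)

theorem Matrix.vecMul_eq_of_dotProduct_mulVec_add {m n R : Type*} [Fintype m] [Fintype n]
    [CommRing R] {A : Matrix m n R} {b w : m → R} {v : n → R} {κ : R}
    (h : ∀ x, w ⬝ᵥ (A *ᵥ x + b) = κ + v ⬝ᵥ x) : w ᵥ* A = v := by
  have hκ : w ⬝ᵥ b = κ := by simpa using h 0
  refine dotProduct_eq _ _ fun x => ?_
  have hx := h x
  rwa [dotProduct_add, dotProduct_mulVec, hκ, add_comm, add_left_cancel_iff] at hx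

theorem acetoneRHS_mass_balance {Vbro VA Vliv Vtis : ℝ} (hVbro : Vbro ≠ 0) (hVA : VA ≠ 0)
    (hVliv : Vliv ≠ 0) (hVtis : Vtis ≠ 0)
    (lba lma lmb lbl lbt kpr kmet qbro qliv VdA Qc D CI : ℝ) (x : Fin 4 → ℝ) :
    ![Vbro, VA, Vliv, Vtis] ⬝ᵥ
        acetoneRHS Vbro VA Vliv Vtis lba lma lmb lbl lbt kpr kmet qbro qliv VdA Qc D CI x =
      kpr + VdA * CI + ![-VdA, 0, -(kmet * lbl), 0] ⬝ᵥ x := by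
  simp only [acetoneRHS, dotProduct, Fin.sum_univ_four, cons_val_zero, cons_val_one,
    cons_val_two, cons_val_three, head_cons, tail_cons]
  field_simp
  ring

theorem acetone_total_mass_general
    (Vbro VA Vliv Vtis lba lma lmb lbl lbt kpr kmet qbro qliv VdA Qc D CI : ℝ)
    (hVbro : 0 < Vbro) (hVA : 0 < VA) (hVliv : 0 < Vliv) (hVtis : 0 < Vtis) :
    (∀ (c : ℝ → Fin 4 → ℝ),
      (∀ t : ℝ, HasDerivAt c
        (acetoneRHS Vbro VA Vliv Vtis lba lma lmb lbl lbt kpr kmet qbro qliv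
          VdA Qc D CI (c t)) t) →
      ∀ t : ℝ, HasDerivAt
        (fun s => Vbro * c s 0 + VA * c s 1 + Vliv * c s 2 + Vtis * c s 3)
        (kpr - kmet * lbl * c t 2 + VdA * (CI - c t 0)) t) ∧
    (∀ (A : Matrix (Fin 4) (Fin 4) ℝ) (b : Fin 4 → ℝ),
      (∀ x : Fin 4 → ℝ, A *ᵥ x + b =
        acetoneRHS Vbro VA Vliv Vtis lba lma lmb lbl lbt kpr kmet qbro qliv VdA Qc D CI x) →
      ![Vbro, VA, Vliv, Vtis] ᵥ* A = ![-VdA, 0, -(kmet * lbl), 0]) := by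
  have balance := acetoneRHS_mass_balance hVbro.ne' hVA.ne' hVliv.ne' hVtis.ne'
    lba lma lmb lbl lbt kpr kmet qbro qliv VdA Qc D CI
  refine ⟨fun c hc t => ?_, fun A b hAb => ?_⟩
  · have hmass := (hc t).const_dotProduct ![Vbro, VA, Vliv, Vtis]
    rw [balance] at hmass
    convert hmass using 1
    · funext s
      simp [dotProduct, Fin.sum_univ_four, add_assoc]
    · simp only [dotProduct, Fin.sum_univ_four, cons_val_zero, cons_val_one, cons_val_two,
        cons_val_three, head_cons, tail_cons]
      ring
  · exact vecMul_eq_of_dotProduct_mulVec_add fun x => by rw [hAb, balance]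

/-- For any differentiable solution of the four-compartment acetone model with
constant inputs, the total mass `m = Ṽ_bro·C_bro + Ṽ_A·C_A + Ṽ_liv·C_liv + Ṽ_tis·C_tis`
satisfies `m' = k_pr − k_met·λ_b:liv·C_liv + V̇_A·(C_I − C_bro)`; equivalently, writing the
model as `ċ = A c + b`, the row vector `(Ṽ_bro, Ṽ_A, Ṽ_liv, Ṽ_tis)` satisfies
`(Ṽ_bro, Ṽ_A, Ṽ_liv, Ṽ_tis)·A = (−V̇_A, 0, −k_met·λ_b:liv, 0)`. -/
theorem acetone_total_mass
    (Vbro VA Vliv Vtis lba lma lmb lbl lbt kpr kmet qbro qliv VdA Qc D CI : ℝ)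
    (hVbro : 0 < Vbro) (hVA : 0 < VA) (hVliv : 0 < Vliv) (hVtis : 0 < Vtis)
    (hlba : 0 < lba) (hlma : 0 < lma) (hlmb : 0 < lmb) (hlbl : 0 < lbl) (hlbt : 0 < lbt)
    (hVdA : 0 ≤ VdA) (hQc : 0 ≤ Qc) (hD : 0 ≤ D) (hkpr : 0 ≤ kpr) (hkmet : 0 ≤ kmet)
    (hqbro0 : 0 ≤ qbro) (hqbro1 : qbro < 1) (hqliv0 : 0 < qliv) (hqliv1 : qliv < 1) :
    (∀ (c : ℝ → Fin 4 → ℝ),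
      (∀ t : ℝ, HasDerivAt c
        (acetoneRHS Vbro VA Vliv Vtis lba lma lmb lbl lbt kpr kmet qbro qliv
          VdA Qc D CI (c t)) t) →
      ∀ t : ℝ, HasDerivAt
        (fun s => Vbro * c s 0 + VA * c s 1 + Vliv * c s 2 + Vtis * c s 3)
        (kpr - kmet * lbl * c t 2 + VdA * (CI - c t 0)) t) ∧
    (∀ (A : Matrix (Fin 4) (Fin 4) ℝ) (b : Fin 4 → ℝ),
      (∀ x : Fin 4 → ℝ, A *ᵥ x + b =
        acetoneRHS Vbro VA Vliv Vtis lba lma lmb lbl lbt kpr kmet qbro qliv VdA Qc D CI x) →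
      ![Vbro, VA, Vliv, Vtis] ᵥ* A = ![-VdA, 0, -(kmet * lbl), 0]) :=
  acetone_total_mass_general Vbro VA Vliv Vtis lba lma lmb lbl lbt kpr kmet qbro qliv VdA Qc D CI
    hVbro hVA hVliv hVtis
end

section
/- Let A be a real n×n Metzler matrix (all off-diagonal entries nonnegative) and suppose there exists a vector z ∈ ℝⁿ with z_i > 0 for all i such that every entry of the row vector zᵀA is ≤ 0. If μ ∈ ℂ is an eigenvalue of A with real part equal to 0, then μ = 0. Consequently, if in addition det A ≠ 0, then every eigenvalue of A has strictly negative real part, i.e., A is a Hurwitz matrix. -/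
/-! Conjugating by `diag z` and transposing turns the column condition `zᵀA ≤ 0` into row
diagonal dominance of `diag z⁻¹ Aᵀ diag z`, which has the same characteristic polynomial as `A`.
By Gershgorin, every eigenvalue of `A` then lies in a disk centred at some `A k k ≤ 0` with
radius `-A k k`. Such a disk meets the closed right half-plane only at `0`, and `0` is not an
eigenvalue when `det A ≠ 0`. -/

open Matrix Module.End

theorem Complex.re_neg_or_eq_zero_of_norm_sub_ofReal_le {μ : ℂ} {a : ℝ} (h : ‖μ - a‖ ≤ -a) :
    μ.re < 0 ∨ μ = 0 := by
  have ha : 0 ≤ -a := (norm_nonneg _).trans h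
  have hsq : (μ.re - a) ^ 2 + μ.im ^ 2 ≤ a ^ 2 := by
    have := pow_le_pow_left₀ (norm_nonneg _) h 2
    rwa [Complex.sq_norm, Complex.normSq_apply, neg_sq, Complex.sub_re, Complex.sub_im,
      Complex.ofReal_re, Complex.ofReal_im, sub_zero, ← sq, ← sq] at this
  refine (lt_or_ge μ.re 0).imp_right fun hre => Complex.ext ?_ ?_
  · simp only [Complex.zero_re]; nlinarith
  · simp only [Complex.zero_im]; nlinarith

namespace Matrix

section Field

variable {K n : Type*} [Field K] [Fintype n] [DecidableEq n]

theorem hasEigenvalue_toLin'_iff_isRoot_charpoly (A : Matrix n n K) (μ : K) :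
    HasEigenvalue (toLin' A) μ ↔ A.charpoly.IsRoot μ := by
  rw [hasEigenvalue_iff_isRoot_charpoly, charpoly_toLin']

theorem hasEigenvalue_toLin'_of_mulVec_eq_smul {A : Matrix n n K} {μ : K} {v : n → K}
    (hv : v ≠ 0) (hAv : A *ᵥ v = μ • v) : HasEigenvalue (toLin' A) μ :=
  hasEigenvalue_of_hasEigenvector ⟨mem_eigenspace_iff.mpr (by rwa [toLin'_apply]), hv⟩

theorem charpoly_diagonal_inv_mul_transpose_mul_diagonal (A : Matrix n n K) {z : n → K}
    (hz : ∀ i, z i ≠ 0) : (diagonal z⁻¹ * Aᵀ * diagonal z).charpoly = A.charpoly := by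
  rw [charpoly_mul_comm, ← Matrix.mul_assoc, diagonal_mul_diagonal]
  simp [hz, charpoly_transpose]

end Field

section NormedField

variable {K n : Type*} [NormedField K] [Fintype n] [DecidableEq n]

theorem eigenvalue_mem_ball_of_col_weights {A : Matrix n n K} {μ : K}
    (hμ : HasEigenvalue (toLin' A) μ) {z : n → K} (hz : ∀ i, z i ≠ 0) :
    ∃ k, μ ∈ Metric.closedBall (A k k) (∑ j ∈ Finset.univ.erase k, ‖z j‖ * ‖A j k‖ / ‖z k‖) := by
  rw [hasEigenvalue_toLin'_iff_isRoot_charpoly,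
    ← charpoly_diagonal_inv_mul_transpose_mul_diagonal A hz,
    ← hasEigenvalue_toLin'_iff_isRoot_charpoly] at hμ
  obtain ⟨k, hk⟩ := eigenvalue_mem_ball hμ
  refine ⟨k, ?_⟩
  convert hk using 2
  · rw [mul_diagonal, diagonal_mul, transpose_apply, Pi.inv_apply]
    field_simp [hz k]
  · refine Finset.sum_congr rfl fun j _ => ?_
    rw [mul_diagonal, diagonal_mul, transpose_apply, Pi.inv_apply, norm_mul, norm_mul, norm_inv]
    ring

end NormedField

section Metzler

variable {n : Type*} [Fintype n] [DecidableEq n]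

theorem exists_norm_sub_diag_le_neg_diag_of_metzler {A : Matrix n n ℝ}
    (hMetzler : ∀ i j, i ≠ j → 0 ≤ A i j) {z : n → ℝ} (hz : ∀ i, 0 < z i)
    (hdd : ∀ j, ∑ i, z i * A i j ≤ 0) {μ : ℂ}
    (hμ : HasEigenvalue (toLin' (A.map Complex.ofReal)) μ) :
    ∃ k, ‖μ - A k k‖ ≤ -A k k := by
  obtain ⟨k, hk⟩ := eigenvalue_mem_ball_of_col_weights hμ (z := fun i => (z i : ℂ))
    fun i => Complex.ofReal_ne_zero.mpr (hz i).ne'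
  have hoff : ∑ j ∈ Finset.univ.erase k, z j * A j k ≤ -(z k * A k k) := by
    have := hdd k
    rw [← Finset.add_sum_erase _ _ (Finset.mem_univ k)] at this
    linarith
  refine ⟨k, ?_⟩
  calc ‖μ - A k k‖ = dist μ (A.map Complex.ofReal k k) := (dist_eq_norm _ _).symm
    _ ≤ ∑ j ∈ Finset.univ.erase k, z j * A j k / z k := by
      convert Metric.mem_closedBall.mp hk using 2 with j hj
      simp only [map_apply, Complex.norm_real, Real.norm_eq_abs, abs_of_pos (hz _),
        abs_of_nonneg (hMetzler j k (Finset.ne_of_mem_erase hj))]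
    _ = (∑ j ∈ Finset.univ.erase k, z j * A j k) / z k := (Finset.sum_div ..).symm
    _ ≤ -(z k * A k k) / z k := div_le_div_of_nonneg_right hoff (hz k).le
    _ = -A k k := by field_simp [(hz k).ne']

end Metzler

end Matrix

/-- If `A` is a real `n×n` Metzler matrix admitting a strictly positive vector
`z` with `zᵀA ≤ 0` componentwise, then any eigenvalue of `A` with zero real part is zero;
consequently, if moreover `det A ≠ 0`, then every eigenvalue of `A` has strictly negative
real part (`A` is Hurwitz). -/
theorem metzler_diag_dominant_hurwitz {n : ℕ}
    (A : Matrix (Fin n) (Fin n) ℝ)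
    (hMetzler : ∀ i j, i ≠ j → 0 ≤ A i j)
    (z : Fin n → ℝ) (hz : ∀ i, 0 < z i)
    (hdd : ∀ j, ∑ i, z i * A i j ≤ 0) :
    (∀ μ : ℂ, (∃ v : Fin n → ℂ, v ≠ 0 ∧ (A.map Complex.ofReal) *ᵥ v = μ • v) →
      μ.re = 0 → μ = 0) ∧
    (A.det ≠ 0 →
      ∀ μ : ℂ, (∃ v : Fin n → ℂ, v ≠ 0 ∧ (A.map Complex.ofReal) *ᵥ v = μ • v) → μ.re < 0) := by
  have hdisk : ∀ μ : ℂ, (∃ v : Fin n → ℂ, v ≠ 0 ∧ (A.map Complex.ofReal) *ᵥ v = μ • v) →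
      μ.re < 0 ∨ μ = 0 := by
    rintro μ ⟨v, hv, hAv⟩
    obtain ⟨k, hk⟩ := exists_norm_sub_diag_le_neg_diag_of_metzler hMetzler hz hdd
      (hasEigenvalue_toLin'_of_mulVec_eq_smul hv hAv)
    exact Complex.re_neg_or_eq_zero_of_norm_sub_ofReal_le hk
  refine ⟨fun μ hμ hre => (hdisk μ hμ).resolve_left hre.not_lt,
    fun hdet μ hμ => (hdisk μ hμ).resolve_right ?_⟩
  rintro rfl
  obtain ⟨v, hv, hAv⟩ := hμ
  have hsingular : (A.map Complex.ofReal).det = 0 :=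
    exists_mulVec_eq_zero_iff.mp ⟨v, hv, by rwa [zero_smul] at hAv⟩
  exact hdet (Complex.ofReal_eq_zero.mp ((Complex.ofRealHom.map_det A).trans hsingular))
end

section
/- Consider an equilibrium point (C_bro, C_A, C_liv, C_tis) of the four-compartment acetone model with constant inputs, D = 0, q_bro > 0 and Q̇_c > 0. Set r_bro := V̇_A/(q_bro·Q̇_c). Then the measured concentration C_measured := C_bro satisfies C_bro = (r_bro·C_I + (1 − q_bro)·λ_b:air·C_A)/((1 − q_bro)·(λ_muc:air/λ_muc:b) + r_bro) = (r_bro·C_I + (1 − q_bro)·C_v̄)/((1 − q_bro)·(λ_muc:air/λ_muc:b) + r_bro) = (r_bro·C_I + C_a)/((λ_muc:air/λ_muc:b) + r_bro), where C_v̄ and C_a are the mixed venous and arterial concentrations of the model. -/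
open Set Matrix

/-!
With `D = 0` the bronchial and alveolar compartments exchange acetone only through the blood.
The alveolar balance then says that the mixed venous concentration equals `λ_b:air · C_A`,
and dividing the bronchial balance by `q_bro · Q̇_c` turns it into a linear equation for `C_bro`
with coefficient `(1 - q_bro) · λ_muc:air/λ_muc:b + r_bro > 0`. Adding `q_bro · λ_muc:air/λ_muc:b · C_bro`
to both sides of that equation gives the arterial form.
-/

namespace AcetoneModel

variable {Vbro VA Vliv Vtis lba lma lmb lbl lbt kpr kmet qbro qliv VdA Qc CI : ℝ}
  {c : Fin 4 → ℝ}

theorem bronchial_balance_of_acetoneRHS_eq_zero (hVbro : Vbro ≠ 0)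
    (h : acetoneRHS Vbro VA Vliv Vtis lba lma lmb lbl lbt kpr kmet qbro qliv VdA Qc 0 CI c = 0) :
    VdA * (CI - c 0) +
      qbro * Qc * (((1 - qbro) * lba * c 1 + qbro * (lma / lmb) * c 0) - (lma / lmb) * c 0) = 0 := by
  simpa [acetoneRHS, hVbro] using congrFun h 0

theorem mixedVenous_eq_of_acetoneRHS_eq_zero (hVA : VA ≠ 0) (hqbro : qbro ≠ 1) (hQc : Qc ≠ 0)
    (h : acetoneRHS Vbro VA Vliv Vtis lba lma lmb lbl lbt kpr kmet qbro qliv VdA Qc 0 CI c = 0) :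
    qliv * lbl * c 2 + (1 - qliv) * lbt * c 3 = lba * c 1 := by
  have h1 := congrFun h 1
  simp only [acetoneRHS, Fin.isValue, cons_val_one, cons_val_zero, zero_mul, zero_add,
    Pi.zero_apply, div_eq_zero_iff, mul_eq_zero, sub_eq_zero, hVA, hQc, or_false] at h1
  exact h1.resolve_left hqbro.symm

theorem bronchial_balance_mul_eq {q Q V CI Cbro x ρ : ℝ} (hq : q ≠ 0) (hQ : Q ≠ 0)
    (h : V * (CI - Cbro) + q * Q * (((1 - q) * x + q * ρ * Cbro) - ρ * Cbro) = 0) :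
    Cbro * ((1 - q) * ρ + V / (q * Q)) = V / (q * Q) * CI + (1 - q) * x := by
  field_simp
  linear_combination -h

end AcetoneModel

open AcetoneModel in
theorem acetone_steady_state_D_zero_general
    (Vbro VA Vliv Vtis lba lma lmb lbl lbt kpr kmet qbro qliv VdA Qc CI : ℝ)
    (Cbro CA Cliv Ctis : ℝ)
    (hVbro : 0 < Vbro) (hVA : 0 < VA)
    (hlma : 0 < lma) (hlmb : 0 < lmb)
    (hVdA : 0 ≤ VdA) (hQc : 0 < Qc)
    (hqbro0 : 0 < qbro) (hqbro1 : qbro < 1)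
    (hequil : acetoneRHS Vbro VA Vliv Vtis lba lma lmb lbl lbt kpr kmet qbro qliv
      VdA Qc 0 CI ![Cbro, CA, Cliv, Ctis] = 0) :
    Cbro = (VdA / (qbro * Qc) * CI + (1 - qbro) * lba * CA) /
        ((1 - qbro) * (lma / lmb) + VdA / (qbro * Qc)) ∧
    Cbro = (VdA / (qbro * Qc) * CI +
        (1 - qbro) * (qliv * lbl * Cliv + (1 - qliv) * lbt * Ctis)) /
        ((1 - qbro) * (lma / lmb) + VdA / (qbro * Qc)) ∧
    Cbro = (VdA / (qbro * Qc) * CI + ((1 - qbro) * lba * CA + qbro * (lma / lmb) * Cbro)) /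
        ((lma / lmb) + VdA / (qbro * Qc)) := by
  have hbro := bronchial_balance_of_acetoneRHS_eq_zero hVbro.ne' hequil
  have hven := mixedVenous_eq_of_acetoneRHS_eq_zero hVA.ne' hqbro1.ne hQc.ne' hequil
  simp only [Fin.isValue, cons_val_zero, cons_val_one, cons_val_two, cons_val_three,
    tail_cons, head_cons] at hbro hven
  have hlin := bronchial_balance_mul_eq hqbro0.ne' hQc.ne' (mul_assoc (1 - qbro) lba CA ▸ hbro)
  have hden : (1 - qbro) * (lma / lmb) + VdA / (qbro * Qc) ≠ 0 := by positivity
  refine ⟨?_, ?_, eq_div_of_mul_eq (by positivity) (by linear_combination hlin)⟩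
  · rw [mul_assoc]
    exact eq_div_of_mul_eq hden hlin
  · rw [hven]
    exact eq_div_of_mul_eq hden hlin

/-- At an equilibrium of the four-compartment acetone model with constant
inputs, `D = 0`, `q_bro > 0` and `Q̇_c > 0`, the measured concentration `C_bro` satisfies
Equation (18) of the paper (purely bronchial gas exchange), in its three equivalent forms,
where `r_bro = V̇_A/(q_bro·Q̇_c)`. -/
theorem acetone_steady_state_D_zero
    (Vbro VA Vliv Vtis lba lma lmb lbl lbt kpr kmet qbro qliv VdA Qc CI : ℝ)
    (Cbro CA Cliv Ctis : ℝ)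
    (hVbro : 0 < Vbro) (hVA : 0 < VA) (hVliv : 0 < Vliv) (hVtis : 0 < Vtis)
    (hlba : 0 < lba) (hlma : 0 < lma) (hlmb : 0 < lmb) (hlbl : 0 < lbl) (hlbt : 0 < lbt)
    (hVdA : 0 ≤ VdA) (hQc : 0 < Qc) (hkpr : 0 ≤ kpr) (hkmet : 0 ≤ kmet)
    (hqbro0 : 0 < qbro) (hqbro1 : qbro < 1) (hqliv0 : 0 < qliv) (hqliv1 : qliv < 1)
    (hequil : acetoneRHS Vbro VA Vliv Vtis lba lma lmb lbl lbt kpr kmet qbro qliv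
      VdA Qc 0 CI ![Cbro, CA, Cliv, Ctis] = 0) :
    Cbro = (VdA / (qbro * Qc) * CI + (1 - qbro) * lba * CA) /
        ((1 - qbro) * (lma / lmb) + VdA / (qbro * Qc)) ∧
    Cbro = (VdA / (qbro * Qc) * CI +
        (1 - qbro) * (qliv * lbl * Cliv + (1 - qliv) * lbt * Ctis)) /
        ((1 - qbro) * (lma / lmb) + VdA / (qbro * Qc)) ∧
    Cbro = (VdA / (qbro * Qc) * CI + ((1 - qbro) * lba * CA + qbro * (lma / lmb) * Cbro)) /
        ((lma / lmb) + VdA / (qbro * Qc)) :=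
  acetone_steady_state_D_zero_general Vbro VA Vliv Vtis lba lma lmb lbl lbt kpr kmet qbro qliv VdA
    Qc CI Cbro CA Cliv Ctis hVbro hVA hlma hlmb hVdA hQc hqbro0 hqbro1 hequil
end

section
/- Let C_I = 0 and let all concentrations be nonnegative, with q_bro ∈ (0,1), Q̇_c > 0, V̇_A ≥ 0 and all partition coefficients positive. Then the physiological boundary condition C_v̄ ≥ C_a holds in both limiting steady states: (i) at any equilibrium of the four-compartment acetone model with D = 0, one has C_a ≤ C_v̄; (ii) at any state with C_bro = C_A satisfying the summed bronchio-alveolar steady-state balance (the D → ∞ case), one has C_a ≤ C_v̄. -/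
/-!
Arterial blood is the mixture `C_a = (1 - q_bro)·λ_b:air·C_A + q_bro·(λ_muc:air/λ_muc:b)·C_bro`
of alveolar and bronchial end-capillary blood. Adding the bronchial and alveolar balances, the
exchange terms collapse to `(1 - q_bro)·Q̇_c·(C_v̄ - C_a)`, which therefore equals the
ventilation loss `V̇_A·C_bro ≥ 0`. With `D = 0` the two balances hold separately: the alveolar
one forces `C_v̄ = λ_b:air·C_A`, the bronchial one puts the bronchial blood below the mixture and
hence below the alveolar blood, so the mixture stays below `C_v̄`.
-/

open Set Matrix

theorem bronchial_alveolar_balance_of_acetoneRHS_eq_zero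
    {Vbro VA Vliv Vtis lba lma lmb lbl lbt kpr kmet qbro qliv VdA Qc CI : ℝ} {c : Fin 4 → ℝ}
    (hVbro : Vbro ≠ 0) (hVA : VA ≠ 0)
    (h : acetoneRHS Vbro VA Vliv Vtis lba lma lmb lbl lbt kpr kmet qbro qliv VdA Qc 0 CI c = 0) :
    VdA * (CI - c 0) +
        qbro * Qc * (((1 - qbro) * lba * c 1 + qbro * (lma / lmb) * c 0) - (lma / lmb) * c 0) = 0 ∧
      (1 - qbro) * Qc * ((qliv * lbl * c 2 + (1 - qliv) * lbt * c 3) - lba * c 1) = 0 := by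
  have hbro := congrFun h 0
  have halv := congrFun h 1
  simp only [acetoneRHS, Fin.isValue, zero_mul, add_zero, zero_add, Pi.zero_apply,
    cons_val_zero, cons_val_one, div_eq_zero_iff, hVbro, hVA, or_false] at hbro halv
  exact ⟨hbro, halv⟩

section Mixing

variable {q Qc VdA la lb x y v : ℝ}

theorem arterial_le_venous_of_separate_balances (hq0 : 0 < q) (hq1 : q < 1) (hQc : 0 < Qc)
    (hVdA : 0 ≤ VdA) (hy : 0 ≤ y)
    (hbro : VdA * (0 - y) + q * Qc * (((1 - q) * la * x + q * lb * y) - lb * y) = 0)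
    (halv : (1 - q) * Qc * (v - la * x) = 0) :
    (1 - q) * la * x + q * lb * y ≤ v := by
  have hv : v = la * x := by
    have hflow : (1 - q) * Qc ≠ 0 := (mul_pos (sub_pos.2 hq1) hQc).ne'
    exact sub_eq_zero.1 ((mul_eq_zero.1 halv).resolve_left hflow)
  have hbro_le : 0 ≤ (1 - q) * (la * x - lb * y) := by
    have h : 0 ≤ q * Qc * (((1 - q) * la * x + q * lb * y) - lb * y) := by
      linarith [mul_nonneg hVdA hy]
    linarith [nonneg_of_mul_nonneg_right h (mul_pos hq0 hQc)]
  have hbro_alv : 0 ≤ la * x - lb * y := nonneg_of_mul_nonneg_right hbro_le (sub_pos.2 hq1)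
  calc (1 - q) * la * x + q * lb * y = la * x - q * (la * x - lb * y) := by ring
    _ ≤ la * x := sub_le_self _ (mul_nonneg hq0.le hbro_alv)
    _ = v := hv.symm

theorem arterial_le_venous_of_summed_balance (hq1 : q < 1) (hQc : 0 < Qc) (hVdA : 0 ≤ VdA)
    (hy : 0 ≤ y)
    (h : VdA * (0 - y) + q * Qc * (((1 - q) * la * x + q * lb * y) - lb * y) +
      (1 - q) * Qc * (v - la * x) = 0) :
    (1 - q) * la * x + q * lb * y ≤ v := by
  have hexchange : (1 - q) * Qc * (v - ((1 - q) * la * x + q * lb * y)) = VdA * y := by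
    linear_combination h
  have hnonneg : 0 ≤ (1 - q) * Qc * (v - ((1 - q) * la * x + q * lb * y)) :=
    hexchange ▸ mul_nonneg hVdA hy
  exact sub_nonneg.1 (nonneg_of_mul_nonneg_right hnonneg (mul_pos (sub_pos.2 hq1) hQc))

end Mixing

theorem acetone_arterial_le_venous_general
    (Vbro VA Vliv Vtis lba lma lmb lbl lbt kpr kmet qbro qliv VdA Qc : ℝ)
    (hVbro : 0 < Vbro) (hVA : 0 < VA)
    (hVdA : 0 ≤ VdA) (hQc : 0 < Qc)
    (hqbro0 : 0 < qbro) (hqbro1 : qbro < 1) :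
    (∀ Cbro CA Cliv Ctis : ℝ, 0 ≤ Cbro → 0 ≤ CA → 0 ≤ Cliv → 0 ≤ Ctis →
      acetoneRHS Vbro VA Vliv Vtis lba lma lmb lbl lbt kpr kmet qbro qliv
        VdA Qc 0 0 ![Cbro, CA, Cliv, Ctis] = 0 →
      (1 - qbro) * lba * CA + qbro * (lma / lmb) * Cbro ≤
        qliv * lbl * Cliv + (1 - qliv) * lbt * Ctis) ∧
    (∀ Cbro CA Cliv Ctis : ℝ, 0 ≤ Cbro → 0 ≤ CA → 0 ≤ Cliv → 0 ≤ Ctis →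
      Cbro = CA →
      VdA * (0 - Cbro) +
        qbro * Qc * (((1 - qbro) * lba * CA + qbro * (lma / lmb) * Cbro)
          - (lma / lmb) * Cbro) +
        (1 - qbro) * Qc * ((qliv * lbl * Cliv + (1 - qliv) * lbt * Ctis) - lba * CA) = 0 →
      (1 - qbro) * lba * CA + qbro * (lma / lmb) * Cbro ≤
        qliv * lbl * Cliv + (1 - qliv) * lbt * Ctis) := by
  refine ⟨fun Cbro CA Cliv Ctis hCbro _ _ _ h => ?_,
    fun Cbro CA Cliv Ctis hCbro _ _ _ _ h =>
      arterial_le_venous_of_summed_balance hqbro1 hQc hVdA hCbro h⟩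
  obtain ⟨hbro, halv⟩ := bronchial_alveolar_balance_of_acetoneRHS_eq_zero hVbro.ne' hVA.ne' h
  exact arterial_le_venous_of_separate_balances hqbro0 hqbro1 hQc hVdA hCbro hbro halv

/-- With `C_I = 0`, nonnegative concentrations, `q_bro ∈ (0,1)`, `Q̇_c > 0`,
`V̇_A ≥ 0` and positive partition coefficients, the physiological boundary condition
`C_v̄ ≥ C_a` holds in both limiting steady states: (i) at any equilibrium of the model with
`D = 0`; (ii) at any state with `C_bro = C_A` satisfying the summed bronchio-alveolar
steady-state balance (the `D → ∞` case). -/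
theorem acetone_arterial_le_venous
    (Vbro VA Vliv Vtis lba lma lmb lbl lbt kpr kmet qbro qliv VdA Qc : ℝ)
    (hVbro : 0 < Vbro) (hVA : 0 < VA) (hVliv : 0 < Vliv) (hVtis : 0 < Vtis)
    (hlba : 0 < lba) (hlma : 0 < lma) (hlmb : 0 < lmb) (hlbl : 0 < lbl) (hlbt : 0 < lbt)
    (hVdA : 0 ≤ VdA) (hQc : 0 < Qc) (hkpr : 0 ≤ kpr) (hkmet : 0 ≤ kmet)
    (hqbro0 : 0 < qbro) (hqbro1 : qbro < 1) (hqliv0 : 0 < qliv) (hqliv1 : qliv < 1) :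
    (∀ Cbro CA Cliv Ctis : ℝ, 0 ≤ Cbro → 0 ≤ CA → 0 ≤ Cliv → 0 ≤ Ctis →
      acetoneRHS Vbro VA Vliv Vtis lba lma lmb lbl lbt kpr kmet qbro qliv
        VdA Qc 0 0 ![Cbro, CA, Cliv, Ctis] = 0 →
      (1 - qbro) * lba * CA + qbro * (lma / lmb) * Cbro ≤
        qliv * lbl * Cliv + (1 - qliv) * lbt * Ctis) ∧
    (∀ Cbro CA Cliv Ctis : ℝ, 0 ≤ Cbro → 0 ≤ CA → 0 ≤ Cliv → 0 ≤ Ctis →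
      Cbro = CA →
      VdA * (0 - Cbro) +
        qbro * Qc * (((1 - qbro) * lba * CA + qbro * (lma / lmb) * Cbro)
          - (lma / lmb) * Cbro) +
        (1 - qbro) * Qc * ((qliv * lbl * Cliv + (1 - qliv) * lbt * Ctis) - lba * CA) = 0 →
      (1 - qbro) * lba * CA + qbro * (lma / lmb) * Cbro ≤
        qliv * lbl * Cliv + (1 - qliv) * lbt * Ctis) :=
  acetone_arterial_le_venous_general Vbro VA Vliv Vtis lba lma lmb lbl lbt kpr kmet qbro qliv VdA Qc
    hVbro hVA hVdA hQc hqbro0 hqbro1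
end

section
/- Consider an equilibrium point (C_bro, C_A, C_liv, C_tis) of the four-compartment acetone model with constant inputs under the isothermal rebreathing conditions: D = 0, λ_muc:air/λ_muc:b = λ_b:air, C_I = C_bro, q_bro ∈ (0,1) and Q̇_c > 0. Then C_bro = C_A and C_measured := C_bro = C_v̄/λ_b:air = C_a/λ_b:air, i.e., the mixed venous blood concentration equals the measured rebreathing breath concentration multiplied by the blood:air partition coefficient. -/
open Set Matrix

/-- The mixed venous concentration `C_v̄`. -/
def mixedVenousConc (qliv lbl lbt : ℝ) (c : Fin 4 → ℝ) : ℝ :=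
  qliv * lbl * c 2 + (1 - qliv) * lbt * c 3

/-- The arterial concentration `C_a`. -/
noncomputable def arterialConc (qbro lba lma lmb : ℝ) (c : Fin 4 → ℝ) : ℝ :=
  (1 - qbro) * lba * c 1 + qbro * (lma / lmb) * c 0

section Equilibrium

variable {Vbro VA Vliv Vtis lba lma lmb lbl lbt kpr kmet qbro qliv VdA Qc : ℝ} {c : Fin 4 → ℝ}

theorem bronchial_eq_alveolar_of_rebreathing
    (h : acetoneRHS Vbro VA Vliv Vtis lba lma lmb lbl lbt kpr kmet qbro qliv VdA Qc 0 (c 0) c 0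
      = 0)
    (hiso : lma / lmb = lba) (hVbro : Vbro ≠ 0) (hlba : lba ≠ 0) (hQc : Qc ≠ 0)
    (hqbro0 : qbro ≠ 0) (hqbro1 : qbro ≠ 1) :
    c 0 = c 1 := by
  simp only [acetoneRHS, cons_val_zero, div_eq_zero_iff, hVbro, or_false, hiso] at h
  have hfactor : (qbro * (1 - qbro) * Qc * lba) * (c 1 - c 0) = 0 := by linear_combination h
  have hcoeff : qbro * (1 - qbro) * Qc * lba ≠ 0 := by
    have : 1 - qbro ≠ 0 := sub_ne_zero.mpr hqbro1.symm
    positivity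
  exact (sub_eq_zero.mp ((mul_eq_zero.mp hfactor).resolve_left hcoeff)).symm

theorem mixedVenousConc_eq_of_rebreathing
    (h : acetoneRHS Vbro VA Vliv Vtis lba lma lmb lbl lbt kpr kmet qbro qliv VdA Qc 0 CI c 1 = 0)
    (hVA : VA ≠ 0) (hQc : Qc ≠ 0) (hqbro1 : qbro ≠ 1) :
    mixedVenousConc qliv lbl lbt c = lba * c 1 := by
  simp only [acetoneRHS, cons_val_one, cons_val_zero, div_eq_zero_iff, hVA, or_false,
    zero_mul, zero_add, mul_eq_zero, hQc, sub_eq_zero, hqbro1.symm, false_or] at h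
  exact h

theorem arterialConc_eq_of_bronchial_eq_alveolar (hiso : lma / lmb = lba) (h : c 0 = c 1) :
    arterialConc qbro lba lma lmb c = lba * c 0 := by
  rw [arterialConc, hiso, ← h]
  ring

end Equilibrium

theorem acetone_isothermal_rebreathing_general
    (Vbro VA Vliv Vtis lba lma lmb lbl lbt kpr kmet qbro qliv VdA Qc CI : ℝ)
    (Cbro CA Cliv Ctis : ℝ)
    (hVbro : 0 < Vbro) (hVA : 0 < VA) (hlba : 0 < lba) (hQc : 0 < Qc)
    (hqbro0 : 0 < qbro) (hqbro1 : qbro < 1)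
    (hiso : lma / lmb = lba) (hCI : CI = Cbro)
    (hequil : acetoneRHS Vbro VA Vliv Vtis lba lma lmb lbl lbt kpr kmet qbro qliv
      VdA Qc 0 CI ![Cbro, CA, Cliv, Ctis] = 0) :
    Cbro = CA ∧
    Cbro = (qliv * lbl * Cliv + (1 - qliv) * lbt * Ctis) / lba ∧
    Cbro = ((1 - qbro) * lba * CA + qbro * (lma / lmb) * Cbro) / lba := by
  subst CI
  set c : Fin 4 → ℝ := ![Cbro, CA, Cliv, Ctis]
  have hCA : Cbro = CA :=
    bronchial_eq_alveolar_of_rebreathing (c := c) (congrFun hequil 0) hiso hVbro.ne' hlba.ne'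
      hQc.ne' hqbro0.ne' hqbro1.ne
  have hvenous : mixedVenousConc qliv lbl lbt c = lba * CA :=
    mixedVenousConc_eq_of_rebreathing (congrFun hequil 1) hVA.ne' hQc.ne' hqbro1.ne
  have harterial : arterialConc qbro lba lma lmb c = lba * Cbro :=
    arterialConc_eq_of_bronchial_eq_alveolar hiso hCA
  refine ⟨hCA, ?_, ?_⟩
  · rw [eq_div_iff hlba.ne', hCA, mul_comm]
    exact hvenous.symm
  · rw [eq_div_iff hlba.ne', mul_comm]
    exact harterial.symm

/-- At an equilibrium of the four-compartment acetone model with constant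
inputs under the isothermal rebreathing conditions (`D = 0`, `λ_muc:air/λ_muc:b = λ_b:air`,
`C_I = C_bro`, `q_bro ∈ (0,1)`, `Q̇_c > 0`), one has `C_bro = C_A` and
`C_measured = C_bro = C_v̄/λ_b:air = C_a/λ_b:air`. -/
theorem acetone_isothermal_rebreathing
    (Vbro VA Vliv Vtis lba lma lmb lbl lbt kpr kmet qbro qliv VdA Qc CI : ℝ)
    (Cbro CA Cliv Ctis : ℝ)
    (hVbro : 0 < Vbro) (hVA : 0 < VA) (hVliv : 0 < Vliv) (hVtis : 0 < Vtis)
    (hlba : 0 < lba) (hlma : 0 < lma) (hlmb : 0 < lmb) (hlbl : 0 < lbl) (hlbt : 0 < lbt)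
    (hVdA : 0 ≤ VdA) (hQc : 0 < Qc) (hkpr : 0 ≤ kpr) (hkmet : 0 ≤ kmet)
    (hqbro0 : 0 < qbro) (hqbro1 : qbro < 1) (hqliv0 : 0 < qliv) (hqliv1 : qliv < 1)
    (hiso : lma / lmb = lba) (hCI : CI = Cbro)
    (hequil : acetoneRHS Vbro VA Vliv Vtis lba lma lmb lbl lbt kpr kmet qbro qliv
      VdA Qc 0 CI ![Cbro, CA, Cliv, Ctis] = 0) :
    Cbro = CA ∧
    Cbro = (qliv * lbl * Cliv + (1 - qliv) * lbt * Ctis) / lba ∧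
    Cbro = ((1 - qbro) * lba * CA + qbro * (lma / lmb) * Cbro) / lba :=
  acetone_isothermal_rebreathing_general Vbro VA Vliv Vtis lba lma lmb lbl lbt kpr kmet qbro qliv
    VdA Qc CI Cbro CA Cliv Ctis hVbro hVA hlba hQc hqbro0 hqbro1 hiso hCI hequil
end
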